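/- arXiv:2002.02554 — 4 statements merged into one kernel-verified Lean document; each statement's English description precedes it below -/
import Mathlib

section
/- On the category of k-modules, the functor Q with QA = ⊕_{x ∈ A} Sym(A) (where Sym is the free symmetric k-algebra), together with counit ε(⟨x₀⟩) = x₀, ε(⟨x₀,x₁⟩) = x₁, ε(⟨x₀,…,xₙ⟩) = 0 for n ≥ 2, and comultiplication δ(⟨x₀,…,xₙ⟩) = Σ over unordered partitions [n] = A₁|…|A_k of ⟨⟨x₀⟩, ⟨x_{A₁}⟩, …, ⟨x_{A_k}⟩⟩, is a comonad on k-Mod. -/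
universe u

open Finset TensorProduct

/-- Unordered partitions of `Fin n` into nonempty parts, as a `Finset`. -/
def partitions (n : ℕ) : Finset (Finset (Finset (Fin n))) :=
  Finset.univ.filter fun P =>
    (∅ ∉ P) ∧ ∀ i : Fin n, (P.filter fun s => i ∈ s).card = 1

/-- Partial injections from `Fin m` to `Fin n` (partial isomorphisms `[m] ≃ [n]`). -/
def partialInjs (m n : ℕ) : Finset (Fin m → Option (Fin n)) :=
  Finset.univ.filter fun θ =>
    ∀ i j : Fin m, ∀ a : Fin n, θ i = some a → θ j = some a → i = j

/-- The arrangement (Notation 5) associated to a partial isomorphism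
`θ : [m] ≃ [n]`: the tail of the list of index pairs `x_{θ₍₁₎θ₍₂₎}`, i.e.
everything after the leading entry `(0,0)`: matched pairs `(i, θ i)`, then
unmatched rows `(i, 0)`, then unmatched columns `(0, j)`. -/
def arrangeTail (m n : ℕ) (θ : Fin m → Option (Fin n)) :
    List (Fin (m + 1) × Fin (n + 1)) :=
  ((List.finRange m).filterMap fun i => (θ i).map fun j => (i.succ, j.succ))
    ++ ((List.finRange m).filterMap fun i =>
          if θ i = none then some (i.succ, (0 : Fin (n + 1))) else none)
    ++ ((List.finRange n).filterMap fun j =>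
          if ∀ i, θ i ≠ some j then some ((0 : Fin (m + 1)), j.succ) else none)

variable (k : Type u) [CommSemiring k]

/-- The data of the comonad `Q A = ⊕_{x ∈ A} Sym(A)` on `k`-modules, presented
by its generators `⟨x₀, x₁, …, xₙ⟩` (symmetric multilinear in `x₁,…,xₙ`, but
not in `x₀`): a family of `k`-modules `Q M` together with the generator
functions. -/
structure QPre : Type (u + 1) where
  Q : ∀ (M : Type u) [AddCommMonoid M] [Module k M], Type u
  addQ : ∀ (M : Type u) [AddCommMonoid M] [Module k M], AddCommMonoid (Q M)
  modQ : ∀ (M : Type u) [AddCommMonoid M] [Module k M],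
    @Module k (Q M) inferInstance (addQ M)
  gen : ∀ (M : Type u) [AddCommMonoid M] [Module k M],
    M → (n : ℕ) → (Fin n → M) → Q M

variable {k}

instance (S : QPre k) (M : Type u) [AddCommMonoid M] [Module k M] :
    AddCommMonoid (S.Q M) := S.addQ M

instance (S : QPre k) (M : Type u) [AddCommMonoid M] [Module k M] :
    Module k (S.Q M) := S.modQ M

namespace QPre

/-- The generators `⟨x₀,…,xₙ⟩` are symmetric and multilinear in `x₁,…,xₙ`, and
`Q M` is universal among targets of such symmetric multilinear families: every
family `s x n v`, symmetric multilinear in `v`, factors uniquely through a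
`k`-linear map on `Q M`.  (This characterises `Q M = ⊕_{x ∈ M} Sym M`.) -/
def Lawful (S : QPre k) : Prop :=
  (∀ (M : Type u) [AddCommMonoid M] [Module k M] (x : M) (n : ℕ)
      (v : Fin n → M) (σ : Equiv.Perm (Fin n)),
      S.gen M x n (v ∘ σ) = S.gen M x n v) ∧
  (∀ (M : Type u) [AddCommMonoid M] [Module k M] (x : M) (n : ℕ)
      (v : Fin n → M) (i : Fin n) (a b : M),
      S.gen M x n (Function.update v i (a + b)) =
        S.gen M x n (Function.update v i a) +
          S.gen M x n (Function.update v i b)) ∧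
  (∀ (M : Type u) [AddCommMonoid M] [Module k M] (x : M) (n : ℕ)
      (v : Fin n → M) (i : Fin n) (r : k) (a : M),
      S.gen M x n (Function.update v i (r • a)) =
        r • S.gen M x n (Function.update v i a)) ∧
  (∀ (M : Type u) [AddCommMonoid M] [Module k M]
      (N : Type u) [AddCommMonoid N] [Module k N]
      (s : M → (n : ℕ) → (Fin n → M) → N),
      (∀ x n (v : Fin n → M) (σ : Equiv.Perm (Fin n)), s x n (v ∘ σ) = s x n v) →
      (∀ x n (v : Fin n → M) (i : Fin n) (a b : M),
        s x n (Function.update v i (a + b)) =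
          s x n (Function.update v i a) + s x n (Function.update v i b)) →
      (∀ x n (v : Fin n → M) (i : Fin n) (r : k) (a : M),
        s x n (Function.update v i (r • a)) =
          r • s x n (Function.update v i a)) →
      ∃! φ : S.Q M →ₗ[k] N, ∀ x n v, φ (S.gen M x n v) = s x n v)

/-- `⟨x_I⟩ = ⟨x₀, x_{i₁}, …, x_{i_k}⟩` for `I = {i₁ < … < i_k} ⊆ [n]`. -/
def genPart (S : QPre k) {M : Type u} [AddCommMonoid M] [Module k M]
    (x : M) {n : ℕ} (v : Fin n → M) (s : Finset (Fin n)) : S.Q M :=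
  S.gen M x s.card fun i => v ((s.orderIsoOfFin rfl i : Fin n))

end QPre

/-!
`Q M` is spanned by the generators, and a generator `⟨x₀, x₁, …, xₙ⟩` only depends on `x₀`
and on the multiset `{x₁, …, xₙ}`; so every law can be checked on a generator `⟨x; m⟩` whose
tail is a multiset `m = s.map v` indexed by a finset `s`, and there `δ` is a sum over the set
partitions of `s`. The counit laws keep a single partition (the one-block partition, resp.
the partition into singletons): all other terms vanish because `ε` kills generators with at
least two tail entries. For coassociativity, both `δ δ` and `Q δ δ` expand into sums over
two-level partitions: `δ δ` gives a partition `F` of `s` together with a partition `W` of the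
set of blocks `F`, while `Q δ δ` gives, by multilinearity, a partition `P` of `s` together
with a partition `ρ b` of every block `b` of `P`. The two are matched by
`P = {⋃ c | c ∈ W}` and `W = {ρ b | b ∈ P}`.
-/
section SetPartitions

variable {α : Type*} [DecidableEq α]

def setPartitions (s : Finset α) : Finset (Finset (Finset α)) :=
  s.powerset.powerset.filter fun c =>
    ∅ ∉ c ∧ (∀ b ∈ c, ∀ b' ∈ c, b ≠ b' → Disjoint b b') ∧ c.sup id = s

theorem mem_setPartitions {s : Finset α} {c : Finset (Finset α)} :
    c ∈ setPartitions s ↔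
      ∅ ∉ c ∧ (c : Set (Finset α)).PairwiseDisjoint id ∧ c.sup id = s := by
  rw [setPartitions, mem_filter, mem_powerset, and_iff_right_iff_imp.2]
  · exact Iff.rfl
  rintro ⟨-, -, rfl⟩ b hb
  exact mem_powerset.2 (le_sup (f := id) hb)

theorem partitions_eq_setPartitions_univ (n : ℕ) :
    partitions n = setPartitions univ := by
  ext P
  simp only [partitions, mem_filter, mem_univ, true_and, mem_setPartitions, card_eq_one,
    eq_singleton_iff_unique_mem]
  refine and_congr_right fun _ => ⟨fun h => ⟨?_, ?_⟩, fun ⟨hdisj, hsup⟩ i => ?_⟩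
  · intro b hb b' hb' hne
    refine disjoint_left.2 fun i hib hib' => hne ?_
    obtain ⟨a, -, ha⟩ := h i
    exact (ha b ⟨hb, hib⟩).trans (ha b' ⟨hb', hib'⟩).symm
  · refine eq_univ_of_forall fun i => ?_
    obtain ⟨b, hb, -⟩ := h i
    exact mem_sup.2 ⟨b, hb⟩
  · obtain ⟨b, hb, hib⟩ := mem_sup.1 (hsup ▸ mem_univ i)
    refine ⟨b, ⟨hb, hib⟩, fun b' hb' => ?_⟩
    by_contra hne
    exact disjoint_left.1 (hdisj hb'.1 hb hne) hb'.2 hib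

theorem setPartitions_empty : setPartitions (∅ : Finset α) = {∅} := by
  ext c
  rw [mem_setPartitions, mem_singleton]
  constructor
  · rintro ⟨h0, -, hsup⟩
    refine eq_empty_of_forall_notMem fun b hb => h0 ?_
    rwa [← subset_empty.1 (hsup ▸ le_sup (f := id) hb)]
  · rintro rfl
    simp

theorem map_mem_setPartitions_map_iff {β : Type*} [DecidableEq β] (e : α ↪ β)
    {s : Finset α} {c : Finset (Finset α)} :
    c.map (mapEmbedding e).toEmbedding ∈ setPartitions (s.map e) ↔ c ∈ setPartitions s := by
  have hmap : ∀ b : Finset α, (mapEmbedding e).toEmbedding b = b.map e := fun _ => rfl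
  have hsup : (c.map (mapEmbedding e).toEmbedding).sup id = (c.sup id).map e := by
    rw [sup_map, apply_sup_eq_sup_comp _ (fun _ _ => map_union _ _) (map_empty e)]
    rfl
  simp only [mem_setPartitions, hsup, map_inj, coe_map, Set.PairwiseDisjoint,
    (mapEmbedding e).toEmbedding.injective.injOn.pairwise_image]
  refine and_congr ?_ (and_congr_left fun _ => ?_)
  · rw [← map_empty e, ← hmap, mem_map' (mapEmbedding e).toEmbedding]
  · simp only [Set.Pairwise, Function.onFun, id, hmap, disjoint_map]

theorem sum_setPartitions_map {β γ : Type*} [DecidableEq β] [AddCommMonoid γ] (e : α ↪ β)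
    (s : Finset α) (F : Finset (Finset β) → γ) :
    ∑ c ∈ setPartitions (s.map e), F c =
      ∑ c ∈ setPartitions s, F (c.map (mapEmbedding e).toEmbedding) := by
  symm
  refine sum_nbij (fun c => c.map (mapEmbedding e).toEmbedding)
    (fun c hc => (map_mem_setPartitions_map_iff e).2 hc)
    (fun c _ c' _ h => map_injective _ h) (fun c hc => ?_) (fun _ _ => rfl)
  obtain ⟨-, -, hsup⟩ := mem_setPartitions.1 hc
  have hsub : c ⊆ s.powerset.map (mapEmbedding e).toEmbedding := by
    intro b hb
    obtain ⟨u, hu, rfl⟩ := subset_map_iff.1 (hsup ▸ le_sup (f := id) hb)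
    exact mem_map_of_mem _ (mem_powerset.2 hu)
  obtain ⟨u, -, rfl⟩ := subset_map_iff.1 hsub
  exact ⟨u, (map_mem_setPartitions_map_iff e).1 hc, rfl⟩

theorem two_le_card_of_mem_setPartitions {s : Finset α} {c : Finset (Finset α)}
    (hc : c ∈ setPartitions s) (hs : s ≠ ∅) (hne : c ≠ {s}) : 2 ≤ c.card := by
  obtain ⟨-, -, hsup⟩ := mem_setPartitions.1 hc
  by_contra! hlt
  obtain ⟨b, hb⟩ := card_le_one_iff_subset_singleton.1 (Nat.le_of_lt_succ hlt)
  rcases subset_singleton_iff.1 hb with rfl | rfl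
  · exact hs hsup.symm
  · exact hne (by rw [← hsup, sup_singleton, id])

theorem singleton_mem_setPartitions {s : Finset α} (hs : s ≠ ∅) : {s} ∈ setPartitions s :=
  mem_setPartitions.2 ⟨fun h => hs (mem_singleton.1 h).symm, by simp, sup_singleton⟩

theorem singletons_mem_setPartitions (s : Finset α) :
    s.map ⟨({·}), singleton_injective⟩ ∈ setPartitions s := by
  refine mem_setPartitions.2 ⟨fun h => ?_, ?_, ?_⟩
  · obtain ⟨a, -, ha⟩ := mem_map.1 h
    exact singleton_ne_empty a ha
  · rw [coe_map]
    rintro _ ⟨a, -, rfl⟩ _ ⟨a', -, rfl⟩ hne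
    exact disjoint_singleton.2 fun h => hne (h ▸ rfl)
  · ext a
    simp

theorem exists_two_le_card_of_mem_setPartitions {s : Finset α} {c : Finset (Finset α)}
    (hc : c ∈ setPartitions s) (hne : c ≠ s.map ⟨({·}), singleton_injective⟩) :
    ∃ b ∈ c, 2 ≤ b.card := by
  obtain ⟨h0, -, hsup⟩ := mem_setPartitions.1 hc
  by_contra! hsmall
  have hsingle : ∀ b ∈ c, ∃ a, b = {a} := fun b hb =>
    card_eq_one.1 (le_antisymm (Nat.le_of_lt_succ (hsmall b hb))
      (card_pos.2 (nonempty_iff_ne_empty.2 fun h => h0 (h ▸ hb))))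
  refine hne (ext fun b => ⟨fun hb => ?_, fun hb => ?_⟩)
  · obtain ⟨a, rfl⟩ := hsingle b hb
    exact mem_map.2 ⟨a, hsup ▸ mem_sup.2 ⟨_, hb, mem_singleton_self a⟩, rfl⟩
  · obtain ⟨a, ha, rfl⟩ := mem_map.1 hb
    obtain ⟨b', hb', hab'⟩ := mem_sup.1 (hsup.symm ▸ ha)
    obtain ⟨a', rfl⟩ := hsingle b' hb'
    obtain rfl := mem_singleton.1 hab'
    exact hb'

end SetPartitions

section PartitionsOfPartitions

variable {α : Type*} [DecidableEq α] {s : Finset α} {P : Finset (Finset α)}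
  {W : Finset (Finset (Finset α))}

theorem disjoint_sup_of_mem_setPartitions (hP : (P : Set (Finset α)).PairwiseDisjoint id)
    (hW : W ∈ setPartitions P) {c c' : Finset (Finset α)} (hc : c ∈ W) (hc' : c' ∈ W)
    (hne : c ≠ c') : Disjoint (c.sup id) (c'.sup id) := by
  obtain ⟨-, hWdisj, hWsup⟩ := mem_setPartitions.1 hW
  rw [Finset.disjoint_sup_left]
  intro B hB
  rw [Finset.disjoint_sup_right]
  intro B' hB'
  refine hP (hWsup ▸ mem_sup.2 ⟨c, hc, hB⟩) (hWsup ▸ mem_sup.2 ⟨c', hc', hB'⟩) ?_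
  rintro rfl
  exact disjoint_left.1 (hWdisj hc hc' hne) hB hB'

theorem sup_nonempty_of_mem_setPartitions (hP : ∅ ∉ P) (hW : W ∈ setPartitions P)
    {c : Finset (Finset α)} (hc : c ∈ W) : (c.sup id).Nonempty := by
  obtain ⟨hW0, -, hWsup⟩ := mem_setPartitions.1 hW
  obtain ⟨B, hB⟩ := nonempty_iff_ne_empty.2 fun h => hW0 (h ▸ hc)
  have hBP : B ∈ P := hWsup ▸ mem_sup.2 ⟨c, hc, hB⟩
  obtain ⟨i, hi⟩ := nonempty_iff_ne_empty.2 fun h => hP (h ▸ hBP)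
  exact ⟨i, mem_sup.2 ⟨B, hB, hi⟩⟩

theorem sup_injOn_of_mem_setPartitions (hP : P ∈ setPartitions s) (hW : W ∈ setPartitions P) :
    Set.InjOn (fun c : Finset (Finset α) => c.sup id) (W : Set (Finset (Finset α))) := by
  obtain ⟨hP0, hPdisj, -⟩ := mem_setPartitions.1 hP
  intro c hc c' hc' heq
  by_contra hne
  have hdisj := disjoint_sup_of_mem_setPartitions hPdisj hW hc hc' hne
  rw [show c.sup id = c'.sup id from heq, disjoint_self, bot_eq_empty] at hdisj
  exact (sup_nonempty_of_mem_setPartitions hP0 hW hc').ne_empty hdisj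

theorem mem_setPartitions_sup_of_mem {F : Finset (Finset α)} (hF : F ∈ setPartitions s)
    (hW : W ∈ setPartitions F) {c : Finset (Finset α)} (hc : c ∈ W) :
    c ∈ setPartitions (c.sup id) := by
  obtain ⟨hF0, hFdisj, -⟩ := mem_setPartitions.1 hF
  have hsub : c ⊆ F := (mem_setPartitions.1 hW).2.2 ▸ le_sup (f := id) hc
  exact mem_setPartitions.2 ⟨fun h => hF0 (hsub h), hFdisj.subset (coe_subset.2 hsub), rfl⟩

theorem image_sup_mem_setPartitions (hP : P ∈ setPartitions s) (hW : W ∈ setPartitions P) :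
    W.image (fun c => c.sup id) ∈ setPartitions s := by
  obtain ⟨hP0, hPdisj, hPsup⟩ := mem_setPartitions.1 hP
  obtain ⟨-, -, hWsup⟩ := mem_setPartitions.1 hW
  refine mem_setPartitions.2 ⟨fun h => ?_, ?_, ?_⟩
  · obtain ⟨c, hc, hc0⟩ := mem_image.1 h
    exact (sup_nonempty_of_mem_setPartitions hP0 hW hc).ne_empty hc0
  · rw [coe_image]
    rintro _ ⟨c, hc, rfl⟩ _ ⟨c', hc', rfl⟩ hne
    exact disjoint_sup_of_mem_setPartitions hPdisj hW hc hc' fun h => hne (h ▸ rfl)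
  · rw [sup_image, ← hPsup, ← hWsup, sup_eq_biUnion W id, sup_biUnion]
    rfl

theorem biUnion_mem_setPartitions (hP : P ∈ setPartitions s) {ρ : P → Finset (Finset α)}
    (hρ : ∀ b : P, ρ b ∈ setPartitions (b : Finset α)) : univ.biUnion ρ ∈ setPartitions s := by
  obtain ⟨-, hPdisj, hPsup⟩ := mem_setPartitions.1 hP
  refine mem_setPartitions.2 ⟨fun h => ?_, ?_, ?_⟩
  · obtain ⟨b, -, hb⟩ := mem_biUnion.1 h
    exact (mem_setPartitions.1 (hρ b)).1 hb
  · intro B hB B' hB' hne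
    obtain ⟨b, -, hB⟩ := mem_biUnion.1 hB
    obtain ⟨b', -, hB'⟩ := mem_biUnion.1 hB'
    obtain ⟨-, hbdisj, hbsup⟩ := mem_setPartitions.1 (hρ b)
    obtain ⟨-, -, hb'sup⟩ := mem_setPartitions.1 (hρ b')
    by_cases hbb : b = b'
    · subst hbb
      exact hbdisj hB hB' hne
    · exact (hPdisj b.2 b'.2 (Subtype.coe_injective.ne hbb)).mono
        (hbsup ▸ le_sup (f := id) hB) (hb'sup ▸ le_sup (f := id) hB')
  · rw [sup_biUnion, ← hPsup, univ_eq_attach]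
    exact (sup_congr rfl fun b _ => (mem_setPartitions.1 (hρ b)).2.2).trans (sup_attach P id)

theorem image_mem_setPartitions_biUnion (hP : P ∈ setPartitions s) {ρ : P → Finset (Finset α)}
    (hρ : ∀ b : P, ρ b ∈ setPartitions (b : Finset α)) :
    univ.image ρ ∈ setPartitions (univ.biUnion ρ) := by
  obtain ⟨hP0, hPdisj, -⟩ := mem_setPartitions.1 hP
  have hsup : ∀ b, (ρ b).sup id = b := fun b => (mem_setPartitions.1 (hρ b)).2.2
  refine mem_setPartitions.2 ⟨fun h => ?_, ?_, ?_⟩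
  · obtain ⟨b, -, hb⟩ := mem_image.1 h
    have h := hsup b
    rw [hb, sup_empty, bot_eq_empty] at h
    exact hP0 (h ▸ b.2)
  · rw [coe_image]
    rintro _ ⟨b, -, rfl⟩ _ ⟨b', -, rfl⟩ hne
    have hbb : (b : Finset α) ≠ b' := fun h => hne (congrArg ρ (Subtype.ext h))
    refine disjoint_left.2 fun B hB hB' => (mem_setPartitions.1 (hρ b)).1 ?_
    have hdisj := (hPdisj b.2 b'.2 hbb).mono (hsup b ▸ le_sup (f := id) hB)
      (hsup b' ▸ le_sup (f := id) hB')
    rw [disjoint_self, bot_eq_empty] at hdisj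
    exact (show B = ∅ from hdisj) ▸ hB
  · rw [sup_image, sup_eq_biUnion]
    rfl

-- `ρ ↦ {ρ b | b ∈ P}` matches the choices of a partition of every block of `P` with the
-- two-level partitions whose coarsening is `P`.
theorem sum_piFinset_setPartitions {γ : Type*} [AddCommMonoid γ] (hP : P ∈ setPartitions s)
    (G : Multiset (Finset (Finset α)) → γ) :
    ∑ ρ ∈ Fintype.piFinset fun b : P => setPartitions (b : Finset α), G (univ.val.map ρ) =
      ∑ W ∈ ((setPartitions s).biUnion setPartitions).filter
        (fun W => W.image (fun c => c.sup id) = P), G W.val := by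
  have hsup : ∀ {ρ : P → Finset (Finset α)}, (∀ b : P, ρ b ∈ setPartitions (b : Finset α)) →
      ∀ b, (ρ b).sup id = b := fun hρ b => (mem_setPartitions.1 (hρ b)).2.2
  refine sum_nbij (fun ρ => univ.image ρ) (fun ρ hρ => ?_) (fun ρ hρ ρ' hρ' h => ?_)
    (fun W hW => ?_) (fun ρ hρ => ?_)
  · rw [Fintype.mem_piFinset] at hρ
    refine mem_filter.2 ⟨mem_biUnion.2 ⟨_, biUnion_mem_setPartitions hP hρ,
      image_mem_setPartitions_biUnion hP hρ⟩, ?_⟩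
    have hcomp : (fun c => c.sup id) ∘ ρ = Subtype.val := funext (hsup hρ)
    rw [image_image, hcomp, univ_eq_attach, attach_image_val]
  · rw [mem_coe, Fintype.mem_piFinset] at hρ hρ'
    funext b
    replace h : univ.image ρ = univ.image ρ' := h
    obtain ⟨b', -, hb'⟩ := mem_image.1 (h ▸ mem_image_of_mem ρ (mem_univ b))
    obtain rfl : b' = b := Subtype.ext (by rw [← hsup hρ' b', hb', hsup hρ b])
    exact hb'.symm
  · obtain ⟨hW', himg⟩ := mem_filter.1 hW
    obtain ⟨F, hF, hWF⟩ := mem_biUnion.1 hW'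
    have hex : ∀ b : P, ∃ c ∈ W, c.sup id = b := fun b => mem_image.1 (by rw [himg]; exact b.2)
    choose ρ hρW hρsup using hex
    refine ⟨ρ, Fintype.mem_piFinset.2 fun b =>
      hρsup b ▸ mem_setPartitions_sup_of_mem hF hWF (hρW b), ?_⟩
    · refine Subset.antisymm (image_subset_iff.2 fun b _ => hρW b) fun c hc => ?_
      have hb : c.sup id ∈ P := himg ▸ mem_image_of_mem _ hc
      exact mem_image.2 ⟨⟨_, hb⟩, mem_univ _,
        sup_injOn_of_mem_setPartitions hF hWF (hρW _) hc (hρsup _)⟩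
  · have hρ' := Fintype.mem_piFinset.1 hρ
    have hinj : Function.Injective ρ := fun b b' h =>
      Subtype.ext (by rw [← hsup hρ' b, ← hsup hρ' b', h])
    rw [image_val_of_injOn hinj.injOn]

theorem sum_setPartitions_setPartitions {γ : Type*} [AddCommMonoid γ] (s : Finset α)
    (G : Multiset (Finset (Finset α)) → γ) :
    ∑ P ∈ setPartitions s, ∑ W ∈ setPartitions P, G W.val =
      ∑ P ∈ setPartitions s,
        ∑ ρ ∈ Fintype.piFinset fun b : P => setPartitions (b : Finset α), G (univ.val.map ρ) := by
  rw [← sum_biUnion, ← sum_fiberwise_of_maps_to (g := fun W => W.image fun c => c.sup id)]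
  · exact sum_congr rfl fun P hP => (sum_piFinset_setPartitions hP G).symm
  · intro W hW
    obtain ⟨P, hP, hWP⟩ := mem_biUnion.1 hW
    exact image_sup_mem_setPartitions hP hWP
  · intro P _ P' _ hne
    exact disjoint_left.2 fun W hW hW' =>
      hne ((mem_setPartitions.1 hW).2.2.symm.trans (mem_setPartitions.1 hW').2.2)

end PartitionsOfPartitions

theorem List.Perm.exists_equiv_get_eq {α : Type*} {l₁ l₂ : List α} (h : l₁.Perm l₂) :
    ∃ e : Fin l₁.length ≃ Fin l₂.length, l₁.get = l₂.get ∘ e := by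
  induction h with
  | nil => exact ⟨Equiv.refl _, funext fun i => i.elim0⟩
  | cons a _ ih =>
    obtain ⟨e, he⟩ := ih
    refine ⟨(finSuccEquiv _).trans (e.optionCongr.trans (finSuccEquiv _).symm),
      funext fun i => Fin.cases ?_ (fun j => ?_) i⟩
    · simp
    · simpa using congrFun he j
  | swap a b l =>
    refine ⟨Equiv.swap 0 1, funext fun i => ?_⟩
    rcases i with ⟨_ | _ | m, hm⟩ <;> simp [Equiv.swap_apply_def, Fin.ext_iff]
  | trans _ _ ih₁ ih₂ =>
    obtain ⟨e₁, he₁⟩ := ih₁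
    obtain ⟨e₂, he₂⟩ := ih₂
    exact ⟨e₁.trans e₂, by rw [he₁, he₂]; rfl⟩

namespace QPre

variable {M : Type u} [AddCommMonoid M] [Module k M]

-- `⟨x; m⟩`, read off an arbitrary ordering of `m`: by symmetry of the generators the
-- ordering does not matter (`genMultiset_map_coe`).
noncomputable def genMultiset (S : QPre k) (x : M) (m : Multiset M) : S.Q M :=
  S.gen M x m.toList.length m.toList.get

variable {N : Type u} [AddCommMonoid N] [Module k N]

def IsQMap (S : QPre k) (f : M →ₗ[k] N) (Qf : S.Q M →ₗ[k] S.Q N) : Prop :=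
  ∀ x n (v : Fin n → M), Qf (S.gen M x n v) = S.gen N (f x) n fun i => f (v i)

def IsCounit (S : QPre k) (ε : S.Q M →ₗ[k] M) : Prop :=
  (∀ x (v : Fin 0 → M), ε (S.gen M x 0 v) = x) ∧
  (∀ x (v : Fin 1 → M), ε (S.gen M x 1 v) = v 0) ∧
  ∀ x n (v : Fin (n + 2) → M), ε (S.gen M x (n + 2) v) = 0

def IsComultiplication (S : QPre k) (δ : S.Q M →ₗ[k] S.Q (S.Q M)) : Prop :=
  ∀ x n (v : Fin n → M), δ (S.gen M x n v) =
    ∑ P ∈ partitions n,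
      S.gen (S.Q M) (S.genPart x v ∅) P.toList.length fun j => S.genPart x v (P.toList.get j)

variable {S : QPre k}

theorem gen_comp_finEquiv (hS : S.Lawful) (x : M) {m n : ℕ} (e : Fin m ≃ Fin n)
    (w : Fin n → M) : S.gen M x m (w ∘ e) = S.gen M x n w := by
  obtain rfl := Fin.equiv_iff_eq.1 ⟨e⟩
  exact hS.1 M x m w e

theorem genMultiset_map_coe (hS : S.Lawful) (x : M) {β : Type*} (l : List β) (g : β → M) :
    S.genMultiset x ((l : Multiset β).map g) = S.gen M x l.length fun i => g (l.get i) := by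
  rw [Multiset.map_coe]
  obtain ⟨e, he⟩ :=
    (Multiset.coe_eq_coe.1 (Multiset.coe_toList (l.map g : Multiset M))).exists_equiv_get_eq
  have hget : (l.map g).get = (fun i => g (l.get i)) ∘ finCongr (List.length_map g) :=
    funext fun i => by simp
  rw [genMultiset, he, gen_comp_finEquiv hS, hget, gen_comp_finEquiv hS]

theorem gen_eq_genMultiset (hS : S.Lawful) (x : M) {n : ℕ} (v : Fin n → M) :
    S.gen M x n v = S.genMultiset x (univ.val.map v) := by
  have hget : (fun i => v ((List.finRange n).get i)) = v ∘ finCongr (List.length_finRange) :=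
    funext fun i => by simp
  rw [show (univ : Finset (Fin n)).val = List.finRange n from rfl, genMultiset_map_coe hS,
    hget, gen_comp_finEquiv hS]

theorem genPart_eq_genMultiset (hS : S.Lawful) (x : M) {n : ℕ} (v : Fin n → M)
    (s : Finset (Fin n)) : S.genPart x v s = S.genMultiset x (s.val.map v) := by
  have hget : (fun i => v (s.orderIsoOfFin rfl i)) =
      (fun i => v ((s.sort (· ≤ ·)).get i)) ∘ finCongr (length_sort _).symm :=
    funext fun i => by simp [orderEmbOfFin_apply]
  rw [← sort_eq s (· ≤ ·), genMultiset_map_coe hS, genPart, hget, gen_comp_finEquiv hS]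

theorem linearMap_ext (hS : S.Lawful) {φ ψ : S.Q M →ₗ[k] N}
    (h : ∀ x n (v : Fin n → M), φ (S.gen M x n v) = ψ (S.gen M x n v)) : φ = ψ := by
  obtain ⟨θ, -, huniq⟩ := hS.2.2.2 M N (fun x n v => φ (S.gen M x n v))
    (fun x n v σ => by rw [hS.1])
    (fun x n v i a b => by rw [hS.2.1, map_add])
    (fun x n v i r a => by rw [hS.2.2.1, map_smul])
  exact (huniq φ fun _ _ _ => rfl).trans (huniq ψ fun x n v => (h x n v).symm).symm

theorem genMultiset_univ_map (hS : S.Lawful) (x : M) {ι : Type*} [Fintype ι] (v : ι → M) :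
    S.genMultiset x (univ.val.map v) =
      S.gen M x (Fintype.card ι) (v ∘ (Fintype.equivFin ι).symm) := by
  rw [gen_eq_genMultiset hS, ← Multiset.map_map, Multiset.map_univ_val_equiv]

noncomputable def genMultilinear (hS : S.Lawful) (x : M) (ι : Type*) [Fintype ι] :
    MultilinearMap k (fun _ : ι => M) (S.Q M) where
  toFun v := S.genMultiset x (univ.val.map v)
  map_update_add' v i a b := by
    simp only [genMultiset_univ_map hS, Function.update_comp_equiv]
    exact hS.2.1 M x _ _ _ a b
  map_update_smul' v i r a := by
    simp only [genMultiset_univ_map hS, Function.update_comp_equiv]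
    exact hS.2.2.1 M x _ _ _ r a

theorem genMultiset_map_sum (hS : S.Lawful) (x : M) {β γ : Type*} [DecidableEq β]
    (P : Finset β) (t : β → Finset γ) (f : γ → M) :
    S.genMultiset x (P.val.map fun b => ∑ c ∈ t b, f c) =
      ∑ ρ ∈ Fintype.piFinset fun b : P => t b, S.genMultiset x (univ.val.map fun b => f (ρ b)) := by
  have hP : P.val.map (fun b => ∑ c ∈ t b, f c) = univ.val.map fun b : P => ∑ c ∈ t b, f c := by
    rw [univ_eq_attach, attach_val]
    exact (Multiset.attach_map_val' _ _).symm
  rw [hP]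
  exact (genMultilinear hS x P).map_sum_finset (fun _ c => f c) fun b => t b

theorem genMultiset_eq_zero_of_zero_mem (hS : S.Lawful) (x : M) {m : Multiset M}
    (h : 0 ∈ m) : S.genMultiset x m = 0 := by
  obtain ⟨i, hi⟩ := List.mem_iff_get.1 (Multiset.mem_toList.2 h)
  rw [genMultiset, ← Function.update_eq_self i m.toList.get, hi, ← zero_smul k (0 : M),
    hS.2.2.1, zero_smul]

theorem IsQMap.apply_genMultiset (hS : S.Lawful) {f : M →ₗ[k] N} {Qf : S.Q M →ₗ[k] S.Q N}
    (hQf : S.IsQMap f Qf) (x : M) (m : Multiset M) :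
    Qf (S.genMultiset x m) = S.genMultiset (f x) (m.map f) := by
  conv_rhs => rw [← Multiset.coe_toList m]
  rw [genMultiset_map_coe hS]
  exact hQf x _ _

theorem IsCounit.apply_genMultiset_zero {ε : S.Q M →ₗ[k] M} (hε : S.IsCounit ε) (x : M) :
    ε (S.genMultiset x 0) = x := by
  rw [genMultiset, Multiset.toList_zero]
  exact hε.1 x _

theorem IsCounit.apply_genMultiset_singleton {ε : S.Q M →ₗ[k] M} (hε : S.IsCounit ε)
    (x a : M) : ε (S.genMultiset x {a}) = a := by
  rw [genMultiset, Multiset.toList_singleton]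
  exact hε.2.1 x _

theorem IsCounit.apply_genMultiset_of_two_le_card {ε : S.Q M →ₗ[k] M} (hε : S.IsCounit ε)
    (x : M) {m : Multiset M} (hm : 2 ≤ m.card) : ε (S.genMultiset x m) = 0 := by
  rw [← Multiset.length_toList] at hm
  rw [genMultiset]
  generalize m.toList = l at hm ⊢
  rcases l with _ | ⟨a, _ | ⟨b, l⟩⟩
  · simp at hm
  · simp at hm
  · exact hε.2.2 x l.length _

theorem IsComultiplication.apply_genMultiset (hS : S.Lawful) {δ : S.Q M →ₗ[k] S.Q (S.Q M)}
    (hδ : S.IsComultiplication δ) (x : M) {α : Type*} [DecidableEq α] (s : Finset α)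
    (v : α → M) :
    δ (S.genMultiset x (s.val.map v)) = ∑ c ∈ setPartitions s,
      S.genMultiset (S.genMultiset x 0) (c.val.map fun b => S.genMultiset x (b.val.map v)) := by
  have hfin : ∀ n (w : Fin n → M), δ (S.gen M x n w) = ∑ P ∈ setPartitions univ,
      S.genMultiset (S.genMultiset x 0) (P.val.map fun b => S.genMultiset x (b.val.map w)) := by
    intro n w
    rw [hδ, partitions_eq_setPartitions_univ]
    refine sum_congr rfl fun P _ => ?_
    simp only [genPart_eq_genMultiset hS, empty_val, Multiset.map_zero]
    rw [← coe_toList P, genMultiset_map_coe hS]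
  let e : Fin s.card ↪ α := s.equivFin.symm.toEmbedding.trans (Function.Embedding.subtype _)
  have hs : univ.map e = s := by
    rw [← map_map, univ_map_equiv_to_embedding, univ_eq_attach, attach_map_val]
  rw [← hs, map_val, Multiset.map_map, ← gen_eq_genMultiset hS, hfin, sum_setPartitions_map]
  simp only [RelEmbedding.coe_toEmbedding, mapEmbedding_apply, map_val, Multiset.map_map,
    Function.comp_def]

theorem IsQMap.eq_id (hS : S.Lawful) {Qid : S.Q M →ₗ[k] S.Q M}
    (h : S.IsQMap LinearMap.id Qid) : Qid = LinearMap.id :=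
  linearMap_ext hS fun x n v => h x n v

theorem IsQMap.eq_comp (hS : S.Lawful) {P : Type u} [AddCommMonoid P] [Module k P]
    {f : M →ₗ[k] N} {g : N →ₗ[k] P}
    {Qf : S.Q M →ₗ[k] S.Q N} {Qg : S.Q N →ₗ[k] S.Q P} {Qgf : S.Q M →ₗ[k] S.Q P}
    (hf : S.IsQMap f Qf) (hg : S.IsQMap g Qg) (hgf : S.IsQMap (g ∘ₗ f) Qgf) :
    Qgf = Qg ∘ₗ Qf :=
  linearMap_ext hS fun x n v => by rw [LinearMap.comp_apply, hgf, hf, hg]; rfl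

theorem IsCounit.naturality (hS : S.Lawful) {f : M →ₗ[k] N} {Qf : S.Q M →ₗ[k] S.Q N}
    {εM : S.Q M →ₗ[k] M} {εN : S.Q N →ₗ[k] N} (hεM : S.IsCounit εM) (hεN : S.IsCounit εN)
    (hQf : S.IsQMap f Qf) : εN ∘ₗ Qf = f ∘ₗ εM :=
  linearMap_ext hS fun x n v => by
    rw [LinearMap.comp_apply, LinearMap.comp_apply, hQf]
    rcases n with _ | _ | n
    · rw [hεM.1, hεN.1]
    · rw [hεM.2.1, hεN.2.1]
    · rw [hεM.2.2, hεN.2.2, map_zero]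

theorem IsComultiplication.naturality (hS : S.Lawful) {f : M →ₗ[k] N}
    {Qf : S.Q M →ₗ[k] S.Q N} {QQf : S.Q (S.Q M) →ₗ[k] S.Q (S.Q N)}
    {δM : S.Q M →ₗ[k] S.Q (S.Q M)} {δN : S.Q N →ₗ[k] S.Q (S.Q N)}
    (hδM : S.IsComultiplication δM) (hδN : S.IsComultiplication δN)
    (hQf : S.IsQMap f Qf) (hQQf : S.IsQMap Qf QQf) : δN ∘ₗ Qf = QQf ∘ₗ δM :=
  linearMap_ext hS fun x n v => by
    rw [LinearMap.comp_apply, LinearMap.comp_apply, hQf, gen_eq_genMultiset hS,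
      gen_eq_genMultiset hS, hδN.apply_genMultiset hS,
      hδM.apply_genMultiset hS, map_sum]
    refine sum_congr rfl fun c _ => ?_
    rw [hQQf.apply_genMultiset hS, hQf.apply_genMultiset hS, Multiset.map_zero, Multiset.map_map]
    congr 1
    refine Multiset.map_congr rfl fun b _ => ?_
    rw [Function.comp_apply, hQf.apply_genMultiset hS, Multiset.map_map]
    rfl

theorem IsCounit.comp_comultiplication (hS : S.Lawful) {ε : S.Q (S.Q M) →ₗ[k] S.Q M}
    {δ : S.Q M →ₗ[k] S.Q (S.Q M)} (hε : S.IsCounit ε) (hδ : S.IsComultiplication δ) :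
    ε ∘ₗ δ = LinearMap.id :=
  linearMap_ext hS fun x n v => by
    rw [LinearMap.comp_apply, LinearMap.id_apply, gen_eq_genMultiset hS,
      hδ.apply_genMultiset hS, map_sum]
    rcases eq_or_ne (univ : Finset (Fin n)) ∅ with hs | hs
    · rw [hs, setPartitions_empty, sum_singleton]
      simp only [empty_val, Multiset.map_zero]
      rw [hε.apply_genMultiset_zero]
    · rw [sum_eq_single_of_mem {univ} (singleton_mem_setPartitions hs), singleton_val,
        Multiset.map_singleton, hε.apply_genMultiset_singleton]
      intro c hc hne
      refine hε.apply_genMultiset_of_two_le_card _ ?_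
      rw [Multiset.card_map]
      exact two_le_card_of_mem_setPartitions hc hs hne

theorem IsCounit.map_comp_comultiplication (hS : S.Lawful) {ε : S.Q M →ₗ[k] M}
    {Qε : S.Q (S.Q M) →ₗ[k] S.Q M} {δ : S.Q M →ₗ[k] S.Q (S.Q M)} (hε : S.IsCounit ε)
    (hQε : S.IsQMap ε Qε) (hδ : S.IsComultiplication δ) : Qε ∘ₗ δ = LinearMap.id :=
  linearMap_ext hS fun x n v => by
    rw [LinearMap.comp_apply, LinearMap.id_apply, gen_eq_genMultiset hS,
      hδ.apply_genMultiset hS, map_sum,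
      sum_eq_single_of_mem _ (singletons_mem_setPartitions univ)]
    · rw [hQε.apply_genMultiset hS, hε.apply_genMultiset_zero, map_val, Multiset.map_map,
        Multiset.map_map]
      congr 1
      refine Multiset.map_congr rfl fun i _ => ?_
      simp [hε.apply_genMultiset_singleton]
    · intro c hc hne
      obtain ⟨b, hb, hcard⟩ := exists_two_le_card_of_mem_setPartitions hc hne
      rw [hQε.apply_genMultiset hS, Multiset.map_map]
      refine genMultiset_eq_zero_of_zero_mem hS _ (Multiset.mem_map.2 ⟨b, hb, ?_⟩)
      refine hε.apply_genMultiset_of_two_le_card _ ?_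
      rwa [Multiset.card_map]

theorem IsComultiplication.coassoc (hS : S.Lawful) {δ : S.Q M →ₗ[k] S.Q (S.Q M)}
    {δQ : S.Q (S.Q M) →ₗ[k] S.Q (S.Q (S.Q M))} {Qδ : S.Q (S.Q M) →ₗ[k] S.Q (S.Q (S.Q M))}
    (hδ : S.IsComultiplication δ) (hδQ : S.IsComultiplication δQ) (hQδ : S.IsQMap δ Qδ) :
    δQ ∘ₗ δ = Qδ ∘ₗ δ :=
  linearMap_ext hS fun x n v => by
    let X := S.genMultiset x 0
    let g := fun b : Finset (Fin n) => S.genMultiset x (b.val.map v)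
    let H := fun c : Finset (Finset (Fin n)) => S.genMultiset X (c.val.map g)
    let G := fun w : Multiset (Finset (Finset (Fin n))) =>
      S.genMultiset (S.genMultiset X 0) (w.map H)
    have hδX : δ X = S.genMultiset X 0 := by
      have h := hδ.apply_genMultiset hS x (∅ : Finset (Fin n)) v
      simp only [empty_val, Multiset.map_zero, setPartitions_empty, sum_singleton] at h
      exact h
    have hδg : δ ∘ g = fun b => ∑ c ∈ setPartitions b, H c :=
      funext fun b => hδ.apply_genMultiset hS x b v
    rw [LinearMap.comp_apply, LinearMap.comp_apply, gen_eq_genMultiset hS,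
      hδ.apply_genMultiset hS, map_sum, map_sum]
    calc ∑ P ∈ setPartitions (univ : Finset (Fin n)), δQ (S.genMultiset X (P.val.map g))
        = ∑ P ∈ setPartitions (univ : Finset (Fin n)), ∑ W ∈ setPartitions P, G W.val := by
          refine sum_congr rfl fun P _ => ?_
          rw [hδQ.apply_genMultiset hS]
      _ = ∑ P ∈ setPartitions (univ : Finset (Fin n)),
            ∑ ρ ∈ Fintype.piFinset fun b : P => setPartitions (b : Finset (Fin n)),
              G (univ.val.map ρ) :=
          sum_setPartitions_setPartitions _ G
      _ = ∑ P ∈ setPartitions (univ : Finset (Fin n)), Qδ (S.genMultiset X (P.val.map g)) := by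
          refine sum_congr rfl fun P _ => ?_
          rw [hQδ.apply_genMultiset hS, hδX, Multiset.map_map, hδg, genMultiset_map_sum hS]
          simp only [G, Multiset.map_map]
          rfl

end QPre

theorem statement14 {k : Type u} [CommSemiring k] (S : QPre k)
    (hS : S.Lawful)
    (Qmap : ∀ {M N : Type u} [AddCommMonoid M] [Module k M] [AddCommMonoid N]
      [Module k N], (M →ₗ[k] N) → (S.Q M →ₗ[k] S.Q N))
    (hQmap : ∀ (M N : Type u) [AddCommMonoid M] [Module k M] [AddCommMonoid N]
      [Module k N] (f : M →ₗ[k] N) (x : M) (n : ℕ) (v : Fin n → M),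
      Qmap f (S.gen M x n v) = S.gen N (f x) n (fun i => f (v i)))
    (εQ : ∀ (M : Type u) [AddCommMonoid M] [Module k M], S.Q M →ₗ[k] M)
    (hε0 : ∀ (M : Type u) [AddCommMonoid M] [Module k M] (x : M)
      (v : Fin 0 → M), εQ M (S.gen M x 0 v) = x)
    (hε1 : ∀ (M : Type u) [AddCommMonoid M] [Module k M] (x : M)
      (v : Fin 1 → M), εQ M (S.gen M x 1 v) = v 0)
    (hε2 : ∀ (M : Type u) [AddCommMonoid M] [Module k M] (x : M) (n : ℕ)
      (v : Fin (n + 2) → M), εQ M (S.gen M x (n + 2) v) = 0)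
    (δQ : ∀ (M : Type u) [AddCommMonoid M] [Module k M],
      S.Q M →ₗ[k] S.Q (S.Q M))
    (hδ : ∀ (M : Type u) [AddCommMonoid M] [Module k M] (x : M) (n : ℕ)
      (v : Fin n → M),
      δQ M (S.gen M x n v) =
        ∑ P ∈ partitions n,
          S.gen (S.Q M) (S.genPart x v ∅) P.toList.length
            (fun j => S.genPart x v (P.toList.get j))) :
    -- functoriality of Q
    (∀ (M : Type u) [AddCommMonoid M] [Module k M] (ξ : S.Q M),
      Qmap (LinearMap.id : M →ₗ[k] M) ξ = ξ) ∧
    (∀ (M N P : Type u) [AddCommMonoid M] [Module k M] [AddCommMonoid N]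
        [Module k N] [AddCommMonoid P] [Module k P]
        (f : M →ₗ[k] N) (g : N →ₗ[k] P) (ξ : S.Q M),
      Qmap (g ∘ₗ f) ξ = Qmap g (Qmap f ξ)) ∧
    -- naturality of ε and δ
    (∀ (M N : Type u) [AddCommMonoid M] [Module k M] [AddCommMonoid N]
        [Module k N] (f : M →ₗ[k] N) (ξ : S.Q M),
      εQ N (Qmap f ξ) = f (εQ M ξ)) ∧
    (∀ (M N : Type u) [AddCommMonoid M] [Module k M] [AddCommMonoid N]
        [Module k N] (f : M →ₗ[k] N) (ξ : S.Q M),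
      δQ N (Qmap f ξ) = Qmap (Qmap f) (δQ M ξ)) ∧
    -- counit laws
    (∀ (M : Type u) [AddCommMonoid M] [Module k M] (ξ : S.Q M),
      εQ (S.Q M) (δQ M ξ) = ξ) ∧
    (∀ (M : Type u) [AddCommMonoid M] [Module k M] (ξ : S.Q M),
      Qmap (εQ M) (δQ M ξ) = ξ) ∧
    -- coassociativity
    (∀ (M : Type u) [AddCommMonoid M] [Module k M] (ξ : S.Q M),
      δQ (S.Q M) (δQ M ξ) = Qmap (δQ M) (δQ M ξ)) := by
  have hε : ∀ (M : Type u) [AddCommMonoid M] [Module k M], S.IsCounit (εQ M) :=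
    fun M _ _ => ⟨hε0 M, hε1 M, hε2 M⟩
  refine ⟨fun M _ _ ξ => ?_, fun M N P _ _ _ _ _ _ f g ξ => ?_, fun M N _ _ _ _ f ξ => ?_,
    fun M N _ _ _ _ f ξ => ?_, fun M _ _ ξ => ?_, fun M _ _ ξ => ?_, fun M _ _ ξ => ?_⟩
  · exact LinearMap.congr_fun (QPre.IsQMap.eq_id hS (hQmap M M _)) ξ
  · exact LinearMap.congr_fun
      (QPre.IsQMap.eq_comp hS (hQmap M N f) (hQmap N P g) (hQmap M P _)) ξ
  · exact LinearMap.congr_fun (QPre.IsCounit.naturality hS (hε M) (hε N) (hQmap M N f)) ξ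
  · exact LinearMap.congr_fun
      (QPre.IsComultiplication.naturality hS (hδ M) (hδ N) (hQmap M N f) (hQmap _ _ _)) ξ
  · exact LinearMap.congr_fun (QPre.IsCounit.comp_comultiplication hS (hε (S.Q M)) (hδ M)) ξ
  · exact LinearMap.congr_fun
      (QPre.IsCounit.map_comp_comultiplication hS (hε M) (hQmap _ _ _) (hδ M)) ξ
  · exact LinearMap.congr_fun
      (QPre.IsComultiplication.coassoc hS (hδ M) (hδ (S.Q M)) (hQmap _ _ _)) ξ
end

section
/- The comonad Q on k-Mod, with comonoid structure e(⟨x₀⟩) = 1, e(⟨x₀,…,xₙ⟩) = 0 for n ≥ 1, Δ(⟨x₀,…,xₙ⟩) = Σ_{I ⊆ [n]} ⟨x_I⟩ ⊗ ⟨x_{[n]∖I}⟩, and deriving transformation d : QA ⊗ A → QA given by ⟨x₀,…,xₙ⟩ ⊗ y ↦ ⟨x₀,…,xₙ, y⟩, satisfies the product rule: Δ ∘ d = ((1 ⊗ d) + (d ⊗ 1)(1 ⊗ σ)) ∘ (Δ ⊗ 1) : QA ⊗ A → QA ⊗ QA. -/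
/-!
Enlarging `⟨x₀,…,xₙ⟩` by `y` adds the index `n+1`. Splitting the subsets `J ⊆ [n+1]` in
`Δ⟨x₀,…,xₙ,y⟩` according to whether `n+1 ∈ J`, the terms with `J = I ⊆ [n]` are
`⟨x_I⟩ ⊗ ⟨x_{Iᶜ}, y⟩ = ⟨x_I⟩ ⊗ d(⟨x_{Iᶜ}⟩ ⊗ y)` and those with `J = I ∪ {n+1}` are
`⟨x_I, y⟩ ⊗ ⟨x_{Iᶜ}⟩ = d(⟨x_I⟩ ⊗ y) ⊗ ⟨x_{Iᶜ}⟩`, because `y` comes last in the increasing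
enumeration of `J`.
-/

universe u

open Finset TensorProduct

variable (k : Type u) [CommSemiring k]

variable {k}

theorem Fin.sum_finset_castSucc {β : Type*} [AddCommMonoid β] {n : ℕ}
    (f : Finset (Fin (n + 1)) → β) :
    ∑ J, f J = ∑ I : Finset (Fin n),
      (f (I.map Fin.castSuccEmb) + f (insert (Fin.last n) (I.map Fin.castSuccEmb))) := by
  rw [← powerset_univ, Fin.univ_castSuccEmb, cons_eq_insert,
    sum_powerset_insert (by simp), map_eq_image, powerset_image, sum_image, sum_image,
    ← sum_add_distrib]
  · simp only [map_eq_image, powerset_univ]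
  all_goals exact (image_injective Fin.castSuccEmb.injective).injOn

theorem Fin.compl_map_castSuccEmb {n : ℕ} (I : Finset (Fin n)) :
    (I.map Fin.castSuccEmb)ᶜ = insert (Fin.last n) (Iᶜ.map Fin.castSuccEmb) := by
  ext a
  induction a using Fin.lastCases <;> simp [Fin.castSucc_ne_last]

theorem Fin.compl_insert_last_map_castSuccEmb {n : ℕ} (I : Finset (Fin n)) :
    (insert (Fin.last n) (I.map Fin.castSuccEmb))ᶜ = Iᶜ.map Fin.castSuccEmb := by
  rw [← compl_compl (Iᶜ.map _), Fin.compl_map_castSuccEmb, compl_compl]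

theorem Finset.orderEmbOfFin_map {α β : Type*} [LinearOrder α] [LinearOrder β] {f : α ↪ β}
    (hf : StrictMono f) (s : Finset α) {m : ℕ} (h : s.card = m) (h' : (s.map f).card = m) :
    ⇑((s.map f).orderEmbOfFin h') = f ∘ s.orderEmbOfFin h :=
  (orderEmbOfFin_unique h' (fun i => mem_map_of_mem f (orderEmbOfFin_mem s h i))
    (hf.comp (s.orderEmbOfFin h).strictMono)).symm

theorem Finset.orderEmbOfFin_insert_of_forall_lt {α : Type*} [LinearOrder α] {s : Finset α}
    {a : α} (ha : ∀ b ∈ s, b < a) {m : ℕ} (h : s.card = m) (h' : (insert a s).card = m + 1) :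
    ⇑((insert a s).orderEmbOfFin h') = Fin.snoc (α := fun _ => α) (s.orderEmbOfFin h) a := by
  refine (orderEmbOfFin_unique h' (fun i => ?_) ?_).symm
  · induction i using Fin.lastCases <;> simp [orderEmbOfFin_mem]
  · rw [← Fin.insertNth_last', Fin.strictMono_insertNth_iff]
    exact ⟨(s.orderEmbOfFin h).strictMono, fun i _ => ha _ (orderEmbOfFin_mem s h i),
      fun i hi => absurd hi (Fin.castSucc_lt_last i).not_ge⟩

namespace QPre

variable (S : QPre k) {M : Type u} [AddCommMonoid M] [Module k M] (x : M)

theorem genPart_eq_gen {n m : ℕ} (v : Fin n → M) (s : Finset (Fin n)) (h : s.card = m) :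
    S.genPart x v s = S.gen M x m fun i => v (s.orderEmbOfFin h i) := by
  subst h
  rfl

theorem genPart_snoc_map_castSuccEmb {n : ℕ} (v : Fin n → M) (y : M) (I : Finset (Fin n)) :
    S.genPart x (Fin.snoc v y) (I.map Fin.castSuccEmb) = S.genPart x v I := by
  rw [S.genPart_eq_gen x _ _ (card_map _), S.genPart_eq_gen x v I rfl,
    orderEmbOfFin_map Fin.strictMono_castSucc I rfl]
  simp

theorem genPart_snoc_insert_last {n : ℕ} (v : Fin n → M) (y : M) (I : Finset (Fin n)) :
    S.genPart x (Fin.snoc v y) (insert (Fin.last n) (I.map Fin.castSuccEmb)) =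
      S.gen M x (I.card + 1) (Fin.snoc (fun i => v (I.orderEmbOfFin rfl i)) y) := by
  have hlt : ∀ b ∈ I.map Fin.castSuccEmb, b < Fin.last n := by simp [Fin.castSucc_lt_last]
  rw [S.genPart_eq_gen x _ _ (by rw [card_insert_of_notMem (by simp), card_map]),
    orderEmbOfFin_insert_of_forall_lt hlt (card_map _),
    orderEmbOfFin_map Fin.strictMono_castSucc I rfl]
  congr 1
  funext i
  induction i using Fin.lastCases <;> simp

end QPre

theorem statement15_general {k : Type u} [CommSemiring k] (S : QPre k)
    (ΔQ : ∀ (M : Type u) [AddCommMonoid M] [Module k M],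
      S.Q M →ₗ[k] (S.Q M ⊗[k] S.Q M))
    (hΔ : ∀ (M : Type u) [AddCommMonoid M] [Module k M] (x : M) (n : ℕ)
      (v : Fin n → M),
      ΔQ M (S.gen M x n v) =
        ∑ I : Finset (Fin n), S.genPart x v I ⊗ₜ[k] S.genPart x v Iᶜ)
    (dQ : ∀ (M : Type u) [AddCommMonoid M] [Module k M],
      S.Q M →ₗ[k] M →ₗ[k] S.Q M)
    (hd : ∀ (M : Type u) [AddCommMonoid M] [Module k M] (x : M) (n : ℕ)
      (v : Fin n → M) (y : M),
      dQ M (S.gen M x n v) y = S.gen M x (n + 1) (Fin.snoc v y)) :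
    ∀ (M : Type u) [AddCommMonoid M] [Module k M] (x : M) (n : ℕ)
      (v : Fin n → M) (y : M),
      ΔQ M (dQ M (S.gen M x n v) y) =
        ∑ I : Finset (Fin n),
          (S.genPart x v I ⊗ₜ[k] dQ M (S.genPart x v Iᶜ) y +
            dQ M (S.genPart x v I) y ⊗ₜ[k] S.genPart x v Iᶜ) := by
  intro M _ _ x n v y
  have hd_genPart : ∀ I : Finset (Fin n), dQ M (S.genPart x v I) y =
      S.genPart x (Fin.snoc v y) (insert (Fin.last n) (I.map Fin.castSuccEmb)) := fun I => by
    rw [S.genPart_snoc_insert_last]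
    exact hd M x _ _ y
  rw [hd, hΔ, Fin.sum_finset_castSucc]
  refine sum_congr rfl fun I _ => ?_
  rw [Fin.compl_map_castSuccEmb, Fin.compl_insert_last_map_castSuccEmb, hd_genPart, hd_genPart,
    S.genPart_snoc_map_castSuccEmb, S.genPart_snoc_map_castSuccEmb]

theorem statement15 {k : Type u} [CommSemiring k] (S : QPre k)
    (hS : S.Lawful)
    (ΔQ : ∀ (M : Type u) [AddCommMonoid M] [Module k M],
      S.Q M →ₗ[k] (S.Q M ⊗[k] S.Q M))
    (hΔ : ∀ (M : Type u) [AddCommMonoid M] [Module k M] (x : M) (n : ℕ)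
      (v : Fin n → M),
      ΔQ M (S.gen M x n v) =
        ∑ I : Finset (Fin n), S.genPart x v I ⊗ₜ[k] S.genPart x v Iᶜ)
    (eQ : ∀ (M : Type u) [AddCommMonoid M] [Module k M], S.Q M →ₗ[k] k)
    (he0 : ∀ (M : Type u) [AddCommMonoid M] [Module k M] (x : M)
      (v : Fin 0 → M), eQ M (S.gen M x 0 v) = 1)
    (he1 : ∀ (M : Type u) [AddCommMonoid M] [Module k M] (x : M) (n : ℕ)
      (v : Fin (n + 1) → M), eQ M (S.gen M x (n + 1) v) = 0)
    (dQ : ∀ (M : Type u) [AddCommMonoid M] [Module k M],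
      S.Q M →ₗ[k] M →ₗ[k] S.Q M)
    (hd : ∀ (M : Type u) [AddCommMonoid M] [Module k M] (x : M) (n : ℕ)
      (v : Fin n → M) (y : M),
      dQ M (S.gen M x n v) y = S.gen M x (n + 1) (Fin.snoc v y)) :
    ∀ (M : Type u) [AddCommMonoid M] [Module k M] (x : M) (n : ℕ)
      (v : Fin n → M) (y : M),
      ΔQ M (dQ M (S.gen M x n v) y) =
        ∑ I : Finset (Fin n),
          (S.genPart x v I ⊗ₜ[k] dQ M (S.genPart x v Iᶜ) y +
            dQ M (S.genPart x v I) y ⊗ₜ[k] S.genPart x v Iᶜ) :=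
  statement15_general S ΔQ hΔ dQ hd
end

section
/- The co-Kleisli category of the comonad Q on k-Mod (with QA = ⊕_{a∈A} Sym(A)) is isomorphic, as a cartesian differential category, to the Faà di Bruno category Faà(kMod_w) of the category of k-modules and arbitrary functions: the isomorphism sends a k-linear map f : QA → B to the family f^{(n)}(x₀,…,xₙ) := f(⟨x₀,…,xₙ⟩). -/
universe u

open Finset TensorProduct

variable (k : Type u) [CommSemiring k]

variable {k}

variable (k)

/-- A morphism `A ⇝ B` of the Faà di Bruno category `Faà(kMod_w)`: a family
`f⁽ⁿ⁾ : A × Aⁿ → B` of functions, symmetric and `k`-multilinear in the last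
`n` variables (and arbitrary in the first). -/
structure FaaFun (A B : Type u) [AddCommMonoid A] [Module k A]
    [AddCommMonoid B] [Module k B] : Type u where
  f : A → (n : ℕ) → (Fin n → A) → B
  symm : ∀ (x : A) (n : ℕ) (v : Fin n → A) (σ : Equiv.Perm (Fin n)),
    f x n (v ∘ σ) = f x n v
  addl : ∀ (x : A) (n : ℕ) (v : Fin n → A) (i : Fin n) (a b : A),
    f x n (Function.update v i (a + b)) =
      f x n (Function.update v i a) + f x n (Function.update v i b)
  smull : ∀ (x : A) (n : ℕ) (v : Fin n → A) (i : Fin n) (r : k) (a : A),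
    f x n (Function.update v i (r • a)) = r • f x n (Function.update v i a)

variable {k}

/-!
STATEMENT 17: The co-Kleisli category of the comonad `Q` on `k`-Mod (with
`QA = ⊕_{a∈A} Sym(A)`) is isomorphic, as a cartesian differential category,
to the Faà di Bruno category `Faà(kMod_w)` of the category of `k`-modules and
arbitrary functions: the isomorphism sends a `k`-linear map `f : QA → B` to
the family `f⁽ⁿ⁾(x₀,…,xₙ) := f⟨x₀,…,xₙ⟩`.  It is the identity on objects,
bijective on homs, `k`-linear on homs, sends the co-Kleisli identities
`ε : QA → A` to the Faà di Bruno identities, co-Kleisli composition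
`g ∘ Qf ∘ δ` to Faà di Bruno composition, and the co-Kleisli differential
`D f = f ∘ d ∘ (1 ⊗ ε) ∘ χ` (with `χ = (Qπ₀ ⊗ Qπ₁) ∘ Δ`) to the Faà di Bruno
differential.
-/
theorem statement17 {k : Type u} [CommSemiring k] (S : QPre k)
    (hS : S.Lawful)
    (Qmap : ∀ {M N : Type u} [AddCommMonoid M] [Module k M] [AddCommMonoid N]
      [Module k N], (M →ₗ[k] N) → (S.Q M →ₗ[k] S.Q N))
    (hQmap : ∀ (M N : Type u) [AddCommMonoid M] [Module k M] [AddCommMonoid N]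
      [Module k N] (f : M →ₗ[k] N) (x : M) (n : ℕ) (v : Fin n → M),
      Qmap f (S.gen M x n v) = S.gen N (f x) n (fun i => f (v i)))
    (εQ : ∀ (M : Type u) [AddCommMonoid M] [Module k M], S.Q M →ₗ[k] M)
    (hε0 : ∀ (M : Type u) [AddCommMonoid M] [Module k M] (x : M)
      (v : Fin 0 → M), εQ M (S.gen M x 0 v) = x)
    (hε1 : ∀ (M : Type u) [AddCommMonoid M] [Module k M] (x : M)
      (v : Fin 1 → M), εQ M (S.gen M x 1 v) = v 0)
    (hε2 : ∀ (M : Type u) [AddCommMonoid M] [Module k M] (x : M) (n : ℕ)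
      (v : Fin (n + 2) → M), εQ M (S.gen M x (n + 2) v) = 0)
    (δQ : ∀ (M : Type u) [AddCommMonoid M] [Module k M],
      S.Q M →ₗ[k] S.Q (S.Q M))
    (hδ : ∀ (M : Type u) [AddCommMonoid M] [Module k M] (x : M) (n : ℕ)
      (v : Fin n → M),
      δQ M (S.gen M x n v) =
        ∑ P ∈ partitions n,
          S.gen (S.Q M) (S.genPart x v ∅) P.toList.length
            (fun j => S.genPart x v (P.toList.get j)))
    (ΔQ : ∀ (M : Type u) [AddCommMonoid M] [Module k M],
      S.Q M →ₗ[k] (S.Q M ⊗[k] S.Q M))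
    (hΔ : ∀ (M : Type u) [AddCommMonoid M] [Module k M] (x : M) (n : ℕ)
      (v : Fin n → M),
      ΔQ M (S.gen M x n v) =
        ∑ I : Finset (Fin n), S.genPart x v I ⊗ₜ[k] S.genPart x v Iᶜ)
    (dQ : ∀ (M : Type u) [AddCommMonoid M] [Module k M],
      S.Q M →ₗ[k] M →ₗ[k] S.Q M)
    (hd : ∀ (M : Type u) [AddCommMonoid M] [Module k M] (x : M) (n : ℕ)
      (v : Fin n → M) (y : M),
      dQ M (S.gen M x n v) y = S.gen M x (n + 1) (Fin.snoc v y)) :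
    ∃ E : ∀ (A B : Type u) [AddCommMonoid A] [Module k A] [AddCommMonoid B]
      [Module k B], (S.Q A →ₗ[k] B) ≃ FaaFun k A B,
      -- the characterisation f⁽ⁿ⁾(x₀,…,xₙ) = f⟨x₀,…,xₙ⟩
      (∀ (A B : Type u) [AddCommMonoid A] [Module k A] [AddCommMonoid B]
          [Module k B] (f : S.Q A →ₗ[k] B) (x : A) (n : ℕ) (v : Fin n → A),
        (E A B f).f x n v = f (S.gen A x n v)) ∧
      -- k-linearity on homs
      (∀ (A B : Type u) [AddCommMonoid A] [Module k A] [AddCommMonoid B]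
          [Module k B] (f g : S.Q A →ₗ[k] B) (x : A) (n : ℕ) (v : Fin n → A),
        (E A B (f + g)).f x n v = (E A B f).f x n v + (E A B g).f x n v) ∧
      (∀ (A B : Type u) [AddCommMonoid A] [Module k A] [AddCommMonoid B]
          [Module k B] (r : k) (f : S.Q A →ₗ[k] B) (x : A) (n : ℕ)
          (v : Fin n → A),
        (E A B (r • f)).f x n v = r • (E A B f).f x n v) ∧
      -- identities: ε corresponds to the Faà di Bruno identity
      (∀ (A : Type u) [AddCommMonoid A] [Module k A],
        (∀ (x : A) (v : Fin 0 → A), (E A A (εQ A)).f x 0 v = x) ∧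
        (∀ (x : A) (v : Fin 1 → A), (E A A (εQ A)).f x 1 v = v 0) ∧
        (∀ (x : A) (n : ℕ) (v : Fin (n + 2) → A),
          (E A A (εQ A)).f x (n + 2) v = 0)) ∧
      -- co-Kleisli composition corresponds to Faà di Bruno composition
      (∀ (A B C : Type u) [AddCommMonoid A] [Module k A] [AddCommMonoid B]
          [Module k B] [AddCommMonoid C] [Module k C]
          (f : S.Q A →ₗ[k] B) (g : S.Q B →ₗ[k] C) (x : A) (n : ℕ)
          (v : Fin n → A),
        (E A C (g ∘ₗ Qmap f ∘ₗ δQ A)).f x n v =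
          ∑ P ∈ partitions n,
            (E B C g).f ((E A B f).f x 0 fun i => i.elim0) P.toList.length
              (fun j => (E A B f).f x (P.toList.get j).card
                (fun t => v (((P.toList.get j).orderIsoOfFin rfl t : Fin n))))) ∧
      -- the co-Kleisli differential corresponds to the Faà di Bruno one
      (∀ (A B : Type u) [AddCommMonoid A] [Module k A] [AddCommMonoid B]
          [Module k B] (f : S.Q A →ₗ[k] B) (p : A × A) (n : ℕ)
          (w : Fin n → A × A),
        (E (A × A) B
            (f ∘ₗ TensorProduct.lift (dQ A) ∘ₗ
              LinearMap.lTensor (S.Q A) (εQ A) ∘ₗ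
              (TensorProduct.map (Qmap (LinearMap.fst k A A))
                  (Qmap (LinearMap.snd k A A)) ∘ₗ
                ΔQ (A × A)))).f p n w =
          (E A B f).f p.1 (n + 1) (Fin.snoc (fun i => (w i).1) p.2) +
            ∑ i : Fin n,
              (E A B f).f p.1 n
                (Function.update (fun j => (w j).1) i (w i).2)) := by
  classical
  obtain ⟨hsymm, haddl, hsmull, huniv⟩ := hS
  have gcast : ∀ (A : Type u) [AddCommMonoid A] [Module k A] (x : A) {m n : ℕ}
      (h : m = n) (v : Fin n → A), S.gen A x m (v ∘ Fin.cast h) = S.gen A x n v := by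
    intro A _ _ x m n h v
    subst h
    rfl
  have gkey : ∀ (A : Type u) [AddCommMonoid A] [Module k A] (x : A) {m n : ℕ}
      (h : m = n) (u : Fin m → A) (v : Fin n → A) (σ : Fin m → Fin n),
      Function.Injective σ → (∀ i, u i = v (σ i)) →
      S.gen A x m u = S.gen A x n v := by
    intro A _ _ x m n h u v σ hinj huv
    subst h
    have hb : Function.Bijective σ := Finite.injective_iff_bijective.mp hinj
    have hu : u = v ∘ (Equiv.ofBijective σ hb) := funext huv
    rw [hu]
    exact hsymm A x _ v (Equiv.ofBijective σ hb)
  let E0 : ∀ (A B : Type u) [AddCommMonoid A] [Module k A] [AddCommMonoid B]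
      [Module k B], (S.Q A →ₗ[k] B) ≃ FaaFun k A B := fun A B _ _ _ _ =>
    { toFun := fun f =>
        { f := fun x n v => f (S.gen A x n v)
          symm := fun x n v σ => congrArg f (hsymm A x n v σ)
          addl := fun x n v i a b =>
            (congrArg f (haddl A x n v i a b)).trans (map_add f _ _)
          smull := fun x n v i r a =>
            (congrArg f (hsmull A x n v i r a)).trans (map_smul f r _) }
      invFun := fun F => (huniv A B F.f F.symm F.addl F.smull).exists.choose
      left_inv := fun f => by
        have spec := huniv A B (fun x n v => f (S.gen A x n v))
          (fun x n v σ => congrArg f (hsymm A x n v σ))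
          (fun x n v i a b => (congrArg f (haddl A x n v i a b)).trans (map_add f _ _))
          (fun x n v i r a => (congrArg f (hsmull A x n v i r a)).trans (map_smul f r _))
        exact spec.unique spec.exists.choose_spec (fun x n v => rfl)
      right_inv := fun F => by
        have hsp := (huniv A B F.f F.symm F.addl F.smull).exists.choose_spec
        cases F
        simp only [FaaFun.mk.injEq]
        funext x n v
        exact hsp x n v }
  have hchar : ∀ (A B : Type u) [AddCommMonoid A] [Module k A] [AddCommMonoid B]
      [Module k B] (f : S.Q A →ₗ[k] B) (x : A) (n : ℕ) (v : Fin n → A),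
      (E0 A B f).f x n v = f (S.gen A x n v) := fun A B _ _ _ _ f x n v => rfl
  refine ⟨E0, hchar, ?_, ?_, ?_, ?_, ?_⟩
  · intro A B _ _ _ _ f g x n v
    simp only [hchar, LinearMap.add_apply]
  · intro A B _ _ _ _ r f x n v
    simp only [hchar, LinearMap.smul_apply]
  · intro A _ _
    refine ⟨fun x v => ?_, fun x v => ?_, fun x n v => ?_⟩
    · rw [hchar, hε0]
    · rw [hchar, hε1]
    · rw [hchar, hε2]
  · -- composition
    intro A B C _ _ _ _ _ _ f g x n v
    simp only [hchar, LinearMap.comp_apply]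
    rw [hδ, map_sum, map_sum]
    refine Finset.sum_congr rfl fun P _ => ?_
    simp only [QPre.genPart] at *
    rw [hQmap]
    have h0 : (∅ : Finset (Fin n)).card = 0 := Finset.card_empty
    have hgen0 : S.gen A x (∅ : Finset (Fin n)).card
        (fun i => v (((∅ : Finset (Fin n)).orderIsoOfFin rfl i : Fin n)))
        = S.gen A x 0 (fun i : Fin 0 => i.elim0) :=
      gkey A x h0 _ _ (Fin.cast h0) (fun a b _ => (Fin.cast h0 a).elim0)
        (fun i => (Fin.cast h0 i).elim0)
    rw [hgen0]
  · -- differential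
    intro A B _ _ _ _ f p n w
    simp only [hchar, LinearMap.comp_apply]
    let T : Finset (Fin n) → B := fun I =>
      f ((dQ A (S.gen A p.1 I.card
        (fun t => (w ((I.orderIsoOfFin rfl t : Fin n))).1)))
        (εQ A (S.gen A p.2 Iᶜ.card
          (fun t => (w ((Iᶜ.orderIsoOfFin rfl t : Fin n))).2))))
    have hLHS : f ((TensorProduct.lift (dQ A))
        ((LinearMap.lTensor (S.Q A) (εQ A))
          ((TensorProduct.map (Qmap (LinearMap.fst k A A))
              (Qmap (LinearMap.snd k A A))) (ΔQ (A × A) (S.gen (A × A) p n w)))))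
        = ∑ I : Finset (Fin n), T I := by
      rw [hΔ]
      simp only [map_sum, TensorProduct.map_tmul, LinearMap.lTensor_tmul,
        TensorProduct.lift.tmul, QPre.genPart, hQmap, LinearMap.fst_apply,
        LinearMap.snd_apply, T]
    rw [hLHS]
    set s₀ : Finset (Finset (Fin n)) :=
      insert Finset.univ ((Finset.univ : Finset (Fin n)).image
        fun j => ({j} : Finset (Fin n))ᶜ) with hs₀
    have hzero : ∀ I ∈ (Finset.univ : Finset (Finset (Fin n))), I ∉ s₀ → T I = 0 := by
      intro I _ hI
      rw [hs₀] at hI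
      simp only [Finset.mem_insert, Finset.mem_image, Finset.mem_univ, true_and,
        not_or, not_exists] at hI
      obtain ⟨h1, h2⟩ := hI
      have hc0 : Iᶜ.card ≠ 0 := by
        intro h
        apply h1
        have he : Iᶜ = ∅ := Finset.card_eq_zero.mp h
        rw [← compl_compl I, he, Finset.compl_empty]
      have hc1 : Iᶜ.card ≠ 1 := by
        intro h
        obtain ⟨j, hj⟩ := Finset.card_eq_one.mp h
        exact h2 j (by rw [← compl_compl I, hj])
      obtain ⟨m, hm⟩ : ∃ m, m + 2 = Iᶜ.card := ⟨Iᶜ.card - 2, by omega⟩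
      have hε : εQ A (S.gen A p.2 Iᶜ.card
          (fun t => (w ((Iᶜ.orderIsoOfFin rfl t : Fin n))).2)) = 0 := by
        rw [← gcast A p.2 hm, hε2]
      show f ((dQ A _) _) = 0
      rw [hε, map_zero, map_zero]
    have hni : Finset.univ ∉ (Finset.univ : Finset (Fin n)).image
        (fun j => ({j} : Finset (Fin n))ᶜ) := by
      simp only [Finset.mem_image, Finset.mem_univ, true_and, not_exists]
      intro j hj
      have : j ∈ ({j} : Finset (Fin n))ᶜ := by rw [hj]; exact Finset.mem_univ j
      simp at this
    have hinj : ∀ x ∈ (Finset.univ : Finset (Fin n)),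
        ∀ y ∈ (Finset.univ : Finset (Fin n)),
        ({x} : Finset (Fin n))ᶜ = ({y} : Finset (Fin n))ᶜ → x = y :=
      fun a _ b _ h => Finset.singleton_injective (compl_injective h)
    have hsplit : ∑ I : Finset (Fin n), T I
        = T Finset.univ + ∑ j : Fin n, T (({j} : Finset (Fin n))ᶜ) := by
      rw [← Finset.sum_subset (Finset.subset_univ s₀) hzero, hs₀,
        Finset.sum_insert hni, Finset.sum_image hinj]
    rw [hsplit]
    -- the univ term
    have hTuniv : T Finset.univ
        = f (S.gen A p.1 (n + 1) (Fin.snoc (fun i => (w i).1) p.2)) := by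
      have hc : ((Finset.univ : Finset (Fin n))ᶜ).card = 0 := by simp
      have hg2 : S.gen A p.2 ((Finset.univ : Finset (Fin n))ᶜ).card
          (fun t => (w ((((Finset.univ : Finset (Fin n))ᶜ).orderIsoOfFin rfl t : Fin n))).2)
          = S.gen A p.2 0 (fun i : Fin 0 => i.elim0) :=
        gkey A p.2 hc _ _ (Fin.cast hc) (fun a b _ => (Fin.cast hc a).elim0)
          (fun i => (Fin.cast hc i).elim0)
      show f ((dQ A _) _) = _
      rw [hg2, hε0, hd]
      congr 1
      have hcu : (Finset.univ : Finset (Fin n)).card + 1 = n + 1 := by simp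
      refine gkey A p.1 hcu _ _
        (fun i => if hi : (i : ℕ) < (Finset.univ : Finset (Fin n)).card then
          Fin.castSucc ((Finset.univ.orderIsoOfFin rfl ⟨(i : ℕ), hi⟩ : Fin n))
          else Fin.last n) ?_ ?_
      · intro a b hab
        beta_reduce at hab
        by_cases ha : (a : ℕ) < (Finset.univ : Finset (Fin n)).card <;>
          by_cases hb : (b : ℕ) < (Finset.univ : Finset (Fin n)).card
        · rw [dif_pos ha, dif_pos hb] at hab
          have h1 := Fin.castSucc_injective n hab
          have h2 := (Finset.univ.orderIsoOfFin (α := Fin n) rfl).injective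
            (Subtype.ext h1)
          have h3 := congrArg Fin.val h2
          exact Fin.ext h3
        · rw [dif_pos ha, dif_neg hb] at hab
          have := congrArg Fin.val hab
          simp only [Fin.coe_castSucc, Fin.val_last] at this
          have := ((Finset.univ.orderIsoOfFin (α := Fin n) rfl ⟨(a : ℕ), ha⟩ : Fin n)).isLt
          omega
        · rw [dif_neg ha, dif_pos hb] at hab
          have := congrArg Fin.val hab
          simp only [Fin.coe_castSucc, Fin.val_last] at this
          have := ((Finset.univ.orderIsoOfFin (α := Fin n) rfl ⟨(b : ℕ), hb⟩ : Fin n)).isLt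
          omega
        · have ha' := a.isLt
          have hb' := b.isLt
          exact Fin.ext (by omega)
      · intro i
        beta_reduce
        induction i using Fin.lastCases with
        | last =>
          have hlast : ¬ ((Fin.last (Finset.univ : Finset (Fin n)).card :
              Fin ((Finset.univ : Finset (Fin n)).card + 1)) : ℕ)
              < (Finset.univ : Finset (Fin n)).card := by simp
          rw [dif_neg hlast, Fin.snoc_last, Fin.snoc_last]
        | cast t =>
          have hc' : ((Fin.castSucc t : Fin ((Finset.univ : Finset (Fin n)).card + 1)) : ℕ)
              < (Finset.univ : Finset (Fin n)).card := t.isLt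
          rw [dif_pos hc', Fin.snoc_castSucc, Fin.snoc_castSucc]
          rfl
    refine congrArg₂ (· + ·) hTuniv (Finset.sum_congr rfl fun j _ => ?_)
    -- the singleton terms
    have hc1 : ((({j} : Finset (Fin n))ᶜ)ᶜ).card = 1 := by simp
    have hg2 : S.gen A p.2 ((({j} : Finset (Fin n))ᶜ)ᶜ).card
        (fun t => (w ((((({j} : Finset (Fin n))ᶜ)ᶜ).orderIsoOfFin rfl t : Fin n))).2)
        = S.gen A p.2 1 (fun _ : Fin 1 => (w j).2) := by
      refine gkey A p.2 hc1 _ _ (fun _ => (0 : Fin 1)) ?_ ?_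
      · intro a b _
        have ha := a.isLt
        have hb := b.isLt
        exact Fin.ext (by omega)
      · intro i
        have hm := ((((({j} : Finset (Fin n))ᶜ)ᶜ).orderIsoOfFin rfl i)).2
        simp only [compl_compl, Finset.mem_singleton] at hm
        simp only [hm]
    have hcj : (({j} : Finset (Fin n))ᶜ).card + 1 = n := by
      have h0 : (({j} : Finset (Fin n))ᶜ).card = n - 1 := by
        simp [Finset.card_compl]
      have := j.pos
      omega
    show f ((dQ A _) _) = _
    rw [hg2, hε1, hd]
    congr 1
    refine gkey A p.1 hcj _ _
      (fun i => if hi : (i : ℕ) < (({j} : Finset (Fin n))ᶜ).card then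
        ((({j} : Finset (Fin n))ᶜ).orderIsoOfFin rfl ⟨(i : ℕ), hi⟩ : Fin n)
        else j) ?_ ?_
    · intro a b hab
      beta_reduce at hab
      by_cases ha : (a : ℕ) < (({j} : Finset (Fin n))ᶜ).card <;>
        by_cases hb : (b : ℕ) < (({j} : Finset (Fin n))ᶜ).card
      · rw [dif_pos ha, dif_pos hb] at hab
        have h2 := ((({j} : Finset (Fin n))ᶜ).orderIsoOfFin rfl).injective
          (Subtype.ext hab)
        have h3 := congrArg Fin.val h2
        exact Fin.ext h3
      · rw [dif_pos ha, dif_neg hb] at hab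
        have hm := (((({j} : Finset (Fin n))ᶜ).orderIsoOfFin rfl ⟨(a : ℕ), ha⟩)).2
        rw [hab] at hm
        simp at hm
      · rw [dif_neg ha, dif_pos hb] at hab
        have hm := (((({j} : Finset (Fin n))ᶜ).orderIsoOfFin rfl ⟨(b : ℕ), hb⟩)).2
        rw [← hab] at hm
        simp at hm
      · have ha' := a.isLt
        have hb' := b.isLt
        exact Fin.ext (by omega)
    · intro i
      beta_reduce
      induction i using Fin.lastCases with
      | last =>
        have hlast : ¬ ((Fin.last (({j} : Finset (Fin n))ᶜ).card :
            Fin ((({j} : Finset (Fin n))ᶜ).card + 1)) : ℕ)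
            < (({j} : Finset (Fin n))ᶜ).card := by simp
        rw [dif_neg hlast, Fin.snoc_last, Function.update_self]
      | cast t =>
        have hc' : ((Fin.castSucc t : Fin ((({j} : Finset (Fin n))ᶜ).card + 1)) : ℕ)
            < (({j} : Finset (Fin n))ᶜ).card := t.isLt
        rw [dif_pos hc', Fin.snoc_castSucc]
        have hm := (((({j} : Finset (Fin n))ᶜ).orderIsoOfFin rfl ⟨((Fin.castSucc t : Fin _) : ℕ), hc'⟩)).2
        simp only [Finset.mem_compl, Finset.mem_singleton] at hm
        rw [Function.update_of_ne hm]
        rfl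
end

section
/- To give a category enriched over the skew monoidal category kMod^Q (the warping of k-Mod by the comonad Q) is equivalently to give: a set of objects, k-modules 𝒜(A,B), identity elements id_A ∈ 𝒜(A,A), and composition functions (g, f₀,…,fₙ) ↦ g^{(n)}(f₀,…,fₙ) : 𝒜(B,C) × 𝒜(A,B)^{n+1} → 𝒜(A,C) for each n ≥ 0, such that: (i) each is k-linear in g and symmetric k-linear in f₁,…,fₙ; (ii) g^{(0)}(id_A) = g; (iii) id^{(0)}(f) = f, id^{(1)}(f₀,f₁) = f₁, id^{(n)} = 0 for n ≥ 2; (iv) (h^{(m)}(g₀,…,g_m))^{(n)}(f⃗) = Σ_{[n]=A₁|…|A_k, θ:[m]≃[k]} h^{(|θ|)}(g_{θ₍₁₎}^{(A_{θ₍₂₎})}(f⃗)). -/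
universe u

open Finset TensorProduct

variable (k : Type u) [CommSemiring k]

variable {k}

section

variable {k : Type u} [CommSemiring k] (S : QPre k) {Obj : Type u}
  (Hom : Obj → Obj → Type u) [∀ A B, AddCommMonoid (Hom A B)]
  [∀ A B, Module k (Hom A B)]
  (m : ∀ A B C : Obj, (Hom B C ⊗[k] S.Q (Hom A B)) →ₗ[k] Hom A C)

/-- The operation `g⁽ⁿ⁾(f₀,…,fₙ) := m(g ⊗ ⟨f₀,…,fₙ⟩)` induced by the enriched
composition maps `m`. -/
noncomputable def opOf {A B C : Obj} (g : Hom B C) (n : ℕ) (f : Fin (n + 1) → Hom A B) :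
    Hom A C :=
  m A B C (g ⊗ₜ[k] S.gen (Hom A B) (f 0) n fun i => f i.succ)

/-- `g^{(I)}(f⃗)` for `I ⊆ [n]`. -/
noncomputable def opIdx {A B C : Obj} (g : Hom B C) {n : ℕ} (f : Fin (n + 1) → Hom A B)
    (s : Finset (Fin n)) : Hom A C :=
  opOf S Hom m g s.card
    (Fin.cases (f 0) fun t => f (Fin.succ ((s.orderIsoOfFin rfl t : Fin n))))

end

/-!
A `k`-linear map out of `Q M`, and likewise a bilinear map out of `Q M × Q N`, is
determined by its values on the generators `⟨x₀, x₁, …, xₙ⟩`. Evaluated on generators with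
the explicit formulas for the unit `⟨1⟩`, the counit, the fusion `δ` (a sum over partitions)
and the comparison `Q M ⊗ Q N → Q (M ⊗ N)` (a sum over partial isomorphisms), the three
enrichment axioms become, term by term, (ii), (iii) and (iv).
-/

namespace QPre.Lawful

variable {k : Type u} [CommSemiring k] {S : QPre k} (hS : S.Lawful)
  {M N P : Type u} [AddCommMonoid M] [Module k M] [AddCommMonoid N] [Module k N]
  [AddCommMonoid P] [Module k P]
include hS

theorem linearMap_ext {φ ψ : S.Q M →ₗ[k] N}
    (h : ∀ x n (v : Fin n → M), φ (S.gen M x n v) = ψ (S.gen M x n v)) : φ = ψ := by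
  obtain ⟨hsym, hadd, hsmul, huniv⟩ := hS
  obtain ⟨_, -, huniq⟩ := huniv M N (fun x n v => ψ (S.gen M x n v))
    (fun x n v σ => congrArg ψ (hsym M x n v σ))
    (fun x n v i a b => by rw [hadd, map_add])
    (fun x n v i r a => by rw [hsmul, map_smul])
  exact (huniq φ h).trans (huniq ψ fun _ _ _ => rfl).symm

theorem linearMap_ext₂ {Φ Ψ : S.Q M →ₗ[k] S.Q N →ₗ[k] P}
    (h : ∀ x m (v : Fin m → M) y n (w : Fin n → N),
      Φ (S.gen M x m v) (S.gen N y n w) = Ψ (S.gen M x m v) (S.gen N y n w)) :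
    Φ = Ψ :=
  hS.linearMap_ext fun x m v => hS.linearMap_ext fun y n w => h x m v y n w

theorem eq_counit_iff {φ ε : S.Q M →ₗ[k] M}
    (hε0 : ∀ x (v : Fin 0 → M), ε (S.gen M x 0 v) = x)
    (hε1 : ∀ x (v : Fin 1 → M), ε (S.gen M x 1 v) = v 0)
    (hε2 : ∀ x n (v : Fin (n + 2) → M), ε (S.gen M x (n + 2) v) = 0) :
    φ = ε ↔ (∀ x (v : Fin 0 → M), φ (S.gen M x 0 v) = x) ∧
      (∀ x (v : Fin 1 → M), φ (S.gen M x 1 v) = v 0) ∧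
      ∀ x n (v : Fin (n + 2) → M), φ (S.gen M x (n + 2) v) = 0 := by
  refine ⟨fun h => h ▸ ⟨hε0, hε1, hε2⟩, fun ⟨h0, h1, h2⟩ => hS.linearMap_ext ?_⟩
  rintro x (_ | _ | n) v
  · rw [h0, hε0]
  · rw [h1, hε1]
  · rw [h2, hε2]

end QPre.Lawful

section Composition

variable {k : Type u} [CommSemiring k] (S : QPre k) {Obj : Type u}
  (Hom : Obj → Obj → Type u) [∀ A B, AddCommMonoid (Hom A B)] [∀ A B, Module k (Hom A B)]
  (m : ∀ A B C : Obj, (Hom B C ⊗[k] S.Q (Hom A B)) →ₗ[k] Hom A C)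

noncomputable def faaDiBruno {A B C D : Obj} {m' n : ℕ} (h : Hom C D)
    (g : Fin (m' + 1) → Hom B C) (f : Fin (n + 1) → Hom A B) : Hom A D :=
  ∑ P ∈ partitions n, ∑ θ ∈ partialInjs m' P.toList.length,
    opOf S Hom m h (arrangeTail m' P.toList.length θ).length
      (Fin.cases (opIdx S Hom m (g 0) f ∅) fun t =>
        opIdx S Hom m (g ((arrangeTail m' P.toList.length θ).get t).1) f
          (Fin.cases ∅ (fun j => P.toList.get j) ((arrangeTail m' P.toList.length θ).get t).2))

variable {S Hom m}

theorem opOf_cons {A B C : Obj} (g : Hom B C) {n : ℕ} (x : Hom A B) (v : Fin n → Hom A B) :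
    opOf S Hom m g n (Fin.cons x v) = m A B C (g ⊗ₜ[k] S.gen _ x n v) :=
  rfl

theorem opIdx_cons {A B C : Obj} (g : Hom B C) {n : ℕ} (x : Hom A B) (v : Fin n → Hom A B)
    (s : Finset (Fin n)) :
    opIdx S Hom m g (Fin.cons x v) s = m A B C (g ⊗ₜ[k] S.genPart x v s) :=
  rfl

theorem opOf_zero {A B C : Obj} (g : Hom B C) (f : Fin 1 → Hom A B) (v : Fin 0 → Hom A B) :
    opOf S Hom m g 0 f = m A B C (g ⊗ₜ[k] S.gen _ (f 0) 0 v) := by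
  rw [opOf, Subsingleton.elim v]

theorem comp_tmul_eq_counit_iff (hS : S.Lawful) {A B : Obj} (e : Hom B B)
    (ε : S.Q (Hom A B) →ₗ[k] Hom A B)
    (hε0 : ∀ x (v : Fin 0 → Hom A B), ε (S.gen _ x 0 v) = x)
    (hε1 : ∀ x (v : Fin 1 → Hom A B), ε (S.gen _ x 1 v) = v 0)
    (hε2 : ∀ x n (v : Fin (n + 2) → Hom A B), ε (S.gen _ x (n + 2) v) = 0) :
    (∀ q, m A B B (e ⊗ₜ[k] q) = ε q) ↔
      (∀ f : Fin 1 → Hom A B, opOf S Hom m e 0 f = f 0) ∧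
      (∀ f : Fin 2 → Hom A B, opOf S Hom m e 1 f = f 1) ∧
      ∀ n (f : Fin (n + 3) → Hom A B), opOf S Hom m e (n + 2) f = 0 :=
  calc (∀ q, m A B B (e ⊗ₜ[k] q) = ε q)
      ↔ (m A B B).comp (TensorProduct.mk k _ _ e) = ε :=
        ⟨fun h => LinearMap.ext h, fun h => LinearMap.congr_fun h⟩
    _ ↔ _ := hS.eq_counit_iff hε0 hε1 hε2
    _ ↔ _ := by
      simp only [Fin.forall_fin_succ_pi, opOf_cons, Fin.cons_zero, Fin.cons_one,
        LinearMap.comp_apply, TensorProduct.mk_apply, forall_comm (α := Hom A B) (β := ℕ)]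

section Associativity

variable {A B C D : Obj}
  (Qm : S.Q (Hom B C ⊗[k] S.Q (Hom A B)) →ₗ[k] S.Q (Hom A C))
  (hQm : ∀ z n (v : Fin n → Hom B C ⊗[k] S.Q (Hom A B)),
    Qm (S.gen _ z n v) = S.gen _ (m A B C z) n fun i => m A B C (v i))
  (μ : S.Q (Hom B C) ⊗[k] S.Q (S.Q (Hom A B)) →ₗ[k] S.Q (Hom B C ⊗[k] S.Q (Hom A B)))
  (hμ : ∀ y m' (w : Fin m' → Hom B C) q n (u : Fin n → S.Q (Hom A B)),
    μ (S.gen _ y m' w ⊗ₜ[k] S.gen _ q n u) =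
      ∑ θ ∈ partialInjs m' n,
        S.gen _ (y ⊗ₜ[k] q) (arrangeTail m' n θ).length fun t =>
          (Fin.cases y w ((arrangeTail m' n θ).get t).1 : Hom B C) ⊗ₜ[k]
            (Fin.cases q u ((arrangeTail m' n θ).get t).2 : S.Q (Hom A B)))
  (δ : S.Q (Hom A B) →ₗ[k] S.Q (S.Q (Hom A B)))
  (hδ : ∀ x n (v : Fin n → Hom A B),
    δ (S.gen _ x n v) =
      ∑ P ∈ partitions n,
        S.gen _ (S.genPart x v ∅) P.toList.length fun j => S.genPart x v (P.toList.get j))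
include hQm hμ hδ

theorem comp_Qmap_fusion_gen_eq_faaDiBruno (h : Hom C D) {m' n : ℕ} (y : Hom B C)
    (w : Fin m' → Hom B C) (x : Hom A B) (v : Fin n → Hom A B) :
    m A C D (h ⊗ₜ[k] Qm (μ (S.gen _ y m' w ⊗ₜ[k] δ (S.gen _ x n v)))) =
      faaDiBruno S Hom m h (Fin.cons y w) (Fin.cons x v) := by
  simp only [hδ, tmul_sum, map_sum, hμ, hQm, faaDiBruno]
  refine sum_congr rfl fun P _ => sum_congr rfl fun θ _ => ?_
  refine congrArg (fun q => m A C D (h ⊗ₜ[k] q)) (congrArg (S.gen _ _ _) (funext fun t => ?_))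
  simp only [opIdx_cons, Fin.cases_succ]
  generalize ((arrangeTail m' P.toList.length θ).get t).2 = j
  cases j using Fin.cases <;> rfl

theorem comp_assoc_iff_faaDiBruno (hS : S.Lawful) :
    (∀ (h : Hom C D) qg qf,
      m A B D (m B C D (h ⊗ₜ[k] qg) ⊗ₜ[k] qf) =
        m A C D (h ⊗ₜ[k] Qm (μ (qg ⊗ₜ[k] δ qf)))) ↔
    ∀ m' n (h : Hom C D) (g : Fin (m' + 1) → Hom B C) (f : Fin (n + 1) → Hom A B),
      opOf S Hom m (opOf S Hom m h m' g) n f = faaDiBruno S Hom m h g f := by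
  constructor
  · intro H m' n h g f
    rw [← Fin.cons_self_tail g, ← Fin.cons_self_tail f]
    exact (H h _ _).trans (comp_Qmap_fusion_gen_eq_faaDiBruno Qm hQm μ hμ δ hδ ..)
  · intro H h
    refine LinearMap.congr_fun₂ (hS.linearMap_ext₂
      (Φ := ((TensorProduct.mk k (Hom B D) (S.Q (Hom A B))).comp
        ((m B C D).comp (TensorProduct.mk k _ _ h))).compr₂ (m A B D))
      (Ψ := ((TensorProduct.mk k (S.Q (Hom B C)) (S.Q (S.Q (Hom A B)))).compl₂ δ).compr₂
        (((m A C D).comp (TensorProduct.mk k _ _ h)).comp (Qm.comp μ)))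
      fun y m' w x n v => ?_)
    exact (H m' n h _ _).trans (comp_Qmap_fusion_gen_eq_faaDiBruno Qm hQm μ hμ δ hδ ..).symm

end Associativity

end Composition

theorem statement18 {k : Type u} [CommSemiring k] (S : QPre k)
    (hS : S.Lawful)
    (Qmap : ∀ {M N : Type u} [AddCommMonoid M] [Module k M] [AddCommMonoid N]
      [Module k N], (M →ₗ[k] N) → (S.Q M →ₗ[k] S.Q N))
    (hQmap : ∀ (M N : Type u) [AddCommMonoid M] [Module k M] [AddCommMonoid N]
      [Module k N] (f : M →ₗ[k] N) (x : M) (n : ℕ) (v : Fin n → M),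
      Qmap f (S.gen M x n v) = S.gen N (f x) n (fun i => f (v i)))
    (εQ : ∀ (M : Type u) [AddCommMonoid M] [Module k M], S.Q M →ₗ[k] M)
    (hε0 : ∀ (M : Type u) [AddCommMonoid M] [Module k M] (x : M)
      (v : Fin 0 → M), εQ M (S.gen M x 0 v) = x)
    (hε1 : ∀ (M : Type u) [AddCommMonoid M] [Module k M] (x : M)
      (v : Fin 1 → M), εQ M (S.gen M x 1 v) = v 0)
    (hε2 : ∀ (M : Type u) [AddCommMonoid M] [Module k M] (x : M) (n : ℕ)
      (v : Fin (n + 2) → M), εQ M (S.gen M x (n + 2) v) = 0)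
    (δQ : ∀ (M : Type u) [AddCommMonoid M] [Module k M],
      S.Q M →ₗ[k] S.Q (S.Q M))
    (hδ : ∀ (M : Type u) [AddCommMonoid M] [Module k M] (x : M) (n : ℕ)
      (v : Fin n → M),
      δQ M (S.gen M x n v) =
        ∑ P ∈ partitions n,
          S.gen (S.Q M) (S.genPart x v ∅) P.toList.length
            (fun j => S.genPart x v (P.toList.get j)))
    (mT : ∀ (M : Type u) [AddCommMonoid M] [Module k M]
      (N : Type u) [AddCommMonoid N] [Module k N],
      (S.Q M ⊗[k] S.Q N) →ₗ[k] S.Q (M ⊗[k] N))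
    (hmT : ∀ (M : Type u) [AddCommMonoid M] [Module k M]
      (N : Type u) [AddCommMonoid N] [Module k N]
      (x : M) (m' : ℕ) (v : Fin m' → M) (y : N) (n : ℕ) (w : Fin n → N),
      mT M N (S.gen M x m' v ⊗ₜ[k] S.gen N y n w) =
        ∑ θ ∈ partialInjs m' n,
          S.gen (M ⊗[k] N) (x ⊗ₜ[k] y) (arrangeTail m' n θ).length
            (fun t =>
              (Fin.cases x v ((arrangeTail m' n θ).get t).1 : M) ⊗ₜ[k]
                (Fin.cases y w ((arrangeTail m' n θ).get t).2 : N)))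
    (mI : k →ₗ[k] S.Q k)
    (hmI : mI 1 = S.gen k (1 : k) 0 (fun i => i.elim0))
    -- the data of the would-be enriched category
    (Obj : Type u) (Hom : Obj → Obj → Type u)
    [∀ A B, AddCommMonoid (Hom A B)] [∀ A B, Module k (Hom A B)]
    (ids : ∀ A, Hom A A)
    (m : ∀ A B C : Obj, (Hom B C ⊗[k] S.Q (Hom A B)) →ₗ[k] Hom A C) :
    -- the three axioms of a `kMod^Q`-enriched category …
    ((∀ (A B : Obj) (g : Hom A B),
        m A A B (g ⊗ₜ[k]
          Qmap (LinearMap.toSpanSingleton k (Hom A A) (ids A)) (mI 1)) = g) ∧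
      (∀ (A B : Obj) (q : S.Q (Hom A B)),
        m A B B ((ids B) ⊗ₜ[k] q) = εQ (Hom A B) q) ∧
      (∀ (A B C D : Obj) (h : Hom C D) (qg : S.Q (Hom B C))
          (qf : S.Q (Hom A B)),
        m A B D ((m B C D (h ⊗ₜ[k] qg)) ⊗ₜ[k] qf) =
          m A C D (h ⊗ₜ[k]
            Qmap (m A B C)
              (mT (Hom B C) (S.Q (Hom A B)) (qg ⊗ₜ[k] δQ (Hom A B) qf)))))
    ↔
    -- … hold iff the induced operations `g⁽ⁿ⁾` satisfy (ii), (iii), (iv):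
    ((∀ (A B : Obj) (g : Hom A B),
        opOf S Hom m g 0 (fun _ => ids A) = g) ∧
      ((∀ (A B : Obj) (f : Fin 1 → Hom A B),
          opOf S Hom m (ids B) 0 f = f 0) ∧
        (∀ (A B : Obj) (f : Fin 2 → Hom A B),
          opOf S Hom m (ids B) 1 f = f 1) ∧
        (∀ (A B : Obj) (n : ℕ) (f : Fin (n + 3) → Hom A B),
          opOf S Hom m (ids B) (n + 2) f = 0)) ∧
      (∀ (A B C D : Obj) (m' n : ℕ) (h : Hom C D)
          (g : Fin (m' + 1) → Hom B C) (f : Fin (n + 1) → Hom A B),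
        opOf S Hom m (opOf S Hom m h m' g) n f =
          ∑ P ∈ partitions n,
            ∑ θ ∈ partialInjs m' P.toList.length,
              opOf S Hom m h (arrangeTail m' P.toList.length θ).length
                (Fin.cases (opIdx S Hom m (g 0) f ∅)
                  (fun t =>
                    opIdx S Hom m
                      (g ((arrangeTail m' P.toList.length θ).get t).1) f
                      (Fin.cases ∅ (fun j => P.toList.get j)
                        ((arrangeTail m' P.toList.length θ).get t).2))))) := by
  have unit_eq (A B : Obj) (g : Hom A B) :
      m A A B (g ⊗ₜ[k] Qmap (LinearMap.toSpanSingleton k (Hom A A) (ids A)) (mI 1)) =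
        opOf S Hom m g 0 fun _ => ids A := by
    rw [hmI, hQmap, LinearMap.toSpanSingleton_apply, one_smul, opOf_zero]
  refine and_congr (forall₃_congr fun A B g => by rw [unit_eq]) (and_congr ?_ ?_)
  · refine (forall₂_congr fun A B => comp_tmul_eq_counit_iff hS (ids B) (εQ (Hom A B))
      (hε0 _) (hε1 _) (hε2 _)).trans ?_
    simp only [forall_and]
  · exact forall₄_congr fun A B C D => comp_assoc_iff_faaDiBruno (Qmap (m A B C))
      (hQmap _ _ (m A B C)) (mT _ _) (hmT _ _) (δQ _) (hδ _) hS
end
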